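/- arXiv:2301.09741 — 14 statements merged into one kernel-verified Lean document; each statement's English description precedes it below -/
import Mathlib

section
/- For every t ∈ ℂ*, letting s = diag(t, t², …, tⁿ), one has s⁻¹ F_k s = t^{n−k} · F_k. Consequently, for every linear subspace H of Mat_n(ℂ) and every g ∈ GL(n,ℂ), if g⁻¹ F_k g ∈ H then (sg)⁻¹ F_k (sg) ∈ H; in particular every Hessenberg variety H(F_k, H) is stable under the one-parameter subgroup S = {diag(t, t², …, tⁿ) : t ∈ ℂ*}. -/
/-- `F_k`: the `n × n` matrix with entry `1` in positions `(i, n-k+i)` for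
`i = 1, …, k` (1-based), i.e. (0-based) `X i j = 1` iff `i < k` and `j = n - k + i`. -/
def Fmat (n k : ℕ) : Matrix (Fin n) (Fin n) ℂ :=
  Matrix.of fun i j => if (i : ℕ) < k ∧ (j : ℕ) = n - k + (i : ℕ) then 1 else 0

namespace Matrix

variable {ι K R : Type*} [Fintype ι] [DecidableEq ι] [Field K] [CommRing R]

theorem inv_diagonal_mul_mul_diagonal_eq_smul {d : ι → K} {M : Matrix ι ι K} {c : K}
    (hd : ∀ i, d i ≠ 0) (hM : ∀ i j, M i j ≠ 0 → d j = c * d i) :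
    (diagonal d)⁻¹ * M * diagonal d = c • M := by
  have hinv : (diagonal d)⁻¹ = diagonal fun i => (d i)⁻¹ :=
    inv_eq_left_inv <| by rw [diagonal_mul_diagonal]; simp [hd]
  ext i j
  rw [hinv, mul_diagonal, diagonal_mul, smul_apply, smul_eq_mul]
  by_cases hij : M i j = 0
  · simp [hij]
  · rw [hM i j hij]
    field_simp [hd i]

theorem conj_mul_eq_smul_conj {A X : Matrix ι ι R} {c : R}
    (hA : A⁻¹ * X * A = c • X) (g : Matrix ι ι R) :
    (A * g)⁻¹ * X * (A * g) = c • (g⁻¹ * X * g) := by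
  calc (A * g)⁻¹ * X * (A * g) = g⁻¹ * (A⁻¹ * X * A) * g := by
        rw [mul_inv_rev]; simp only [Matrix.mul_assoc]
    _ = c • (g⁻¹ * X * g) := by rw [hA, Matrix.mul_smul, Matrix.smul_mul]

end Matrix

theorem val_eq_of_Fmat_apply_ne_zero {n k : ℕ} {i j : Fin n} (h : Fmat n k i j ≠ 0) :
    (j : ℕ) = n - k + i := by
  by_contra hj
  exact h (by simp [Fmat, hj])

theorem stmt1_general {n k : ℕ}
    (t : ℂ) (ht : t ≠ 0) :
    (Matrix.diagonal (fun i : Fin n => t ^ ((i : ℕ) + 1)))⁻¹ * Fmat n k *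
        Matrix.diagonal (fun i : Fin n => t ^ ((i : ℕ) + 1)) = t ^ (n - k) • Fmat n k ∧
    ∀ (H : Submodule ℂ (Matrix (Fin n) (Fin n) ℂ)) (g : Matrix (Fin n) (Fin n) ℂ),
      IsUnit g → g⁻¹ * Fmat n k * g ∈ H →
      (Matrix.diagonal (fun i : Fin n => t ^ ((i : ℕ) + 1)) * g)⁻¹ * Fmat n k *
        (Matrix.diagonal (fun i : Fin n => t ^ ((i : ℕ) + 1)) * g) ∈ H := by
  have hconj : (Matrix.diagonal (fun i : Fin n => t ^ ((i : ℕ) + 1)))⁻¹ * Fmat n k *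
      Matrix.diagonal (fun i : Fin n => t ^ ((i : ℕ) + 1)) = t ^ (n - k) • Fmat n k := by
    refine Matrix.inv_diagonal_mul_mul_diagonal_eq_smul (fun _ => pow_ne_zero _ ht)
      fun i j hij => ?_
    rw [val_eq_of_Fmat_apply_ne_zero hij, ← pow_add]
    ring_nf
  refine ⟨hconj, fun H g _ hg => ?_⟩
  rw [Matrix.conj_mul_eq_smul_conj hconj]
  exact H.smul_mem _ hg

/-- For every `t ∈ ℂ*`, letting `s = diag(t, t², …, tⁿ)`, one has
`s⁻¹ F_k s = t^(n-k) • F_k`; consequently, for every linear subspace `H` of the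
matrices and every `g ∈ GL(n,ℂ)`, if `g⁻¹ F_k g ∈ H` then `(sg)⁻¹ F_k (sg) ∈ H`;
in particular every Hessenberg variety `H(F_k, H)` is stable under the one-parameter
subgroup `S = {diag(t, …, tⁿ)}`. -/
theorem stmt1 {n k : ℕ} (hk1 : 1 ≤ k) (hk2 : k ≤ n - 1)
    (t : ℂ) (ht : t ≠ 0) :
    (Matrix.diagonal (fun i : Fin n => t ^ ((i : ℕ) + 1)))⁻¹ * Fmat n k *
        Matrix.diagonal (fun i : Fin n => t ^ ((i : ℕ) + 1)) = t ^ (n - k) • Fmat n k ∧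
    ∀ (H : Submodule ℂ (Matrix (Fin n) (Fin n) ℂ)) (g : Matrix (Fin n) (Fin n) ℂ),
      IsUnit g → g⁻¹ * Fmat n k * g ∈ H →
      (Matrix.diagonal (fun i : Fin n => t ^ ((i : ℕ) + 1)) * g)⁻¹ * Fmat n k *
        (Matrix.diagonal (fun i : Fin n => t ^ ((i : ℕ) + 1)) * g) ∈ H :=
  stmt1_general t ht
end

section
/- Let X be an n×n skeletal nilpotent matrix. Then there exists a permutation w of {1,…,n} such that for every t ∈ ℂ*, setting s_w(t) = diag(t^{w(1)}, t^{w(2)}, …, t^{w(n)}), one has s_w(t)⁻¹ X s_w(t) = t · X. Consequently, for every Hessenberg space H and every g ∈ GL(n,ℂ), if g⁻¹ X g ∈ H then (s_w(t) g)⁻¹ X (s_w(t) g) ∈ H; i.e., the Hessenberg variety H(X,H) is stable under the subtorus {s_w(t) : t ∈ ℂ*} of T. -/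
/-!
Think of `X` as the partial injection `i ↦ X(i)` on `{1,…,n}`; since `X(i) > i`, its orbits are
chains. Listing the chains one after another and each chain in order gives a permutation `w` with
`w(X(i)) = w(i) + 1`. Then `X s_w(t) = s_w(t) (t • X)` entrywise, so conjugation by `s_w(t)` scales
`X` by `t`, and `H` is closed under scalars.
-/

/-- The Hessenberg space of a Hessenberg function `h` (0-based indices). -/
def hessSpace {n : ℕ} (h : Fin n → Fin n) : Set (Matrix (Fin n) (Fin n) ℂ) :=
  {M | ∀ i j : Fin n, h j < i → M i j = 0}

def Skeletal {n : ℕ} (X : Matrix (Fin n) (Fin n) ℂ) : Prop :=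
  (∀ i j : Fin n, j ≤ i → X i j = 0) ∧
  (∀ i j j' : Fin n, X i j ≠ 0 → X i j' ≠ 0 → j = j') ∧
  (∀ i i' j : Fin n, X i j ≠ 0 → X i' j ≠ 0 → i = i')

open Finset

section Rank

variable {α : Type*} [Fintype α] (f : α → ℕ)

def rankBy (a : α) : ℕ := #(univ.filter fun b => f b < f a)

variable {f}

theorem rankBy_lt_card (a : α) : rankBy f a < Fintype.card α :=
  card_lt_card (filter_ssubset.mpr ⟨a, mem_univ a, lt_irrefl _⟩)

theorem rankBy_strictMono {a b : α} (h : f a < f b) : rankBy f a < rankBy f b := by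
  refine card_lt_card ⟨fun c hc => ?_, fun hsub => ?_⟩
  · simp only [mem_filter, mem_univ, true_and] at hc ⊢
    exact hc.trans h
  · exact absurd (hsub (by simpa using h)) (by simp)

theorem rankBy_injective (hf : Function.Injective f) : Function.Injective (rankBy f) := by
  intro a b hab
  by_contra hne
  rcases lt_or_gt_of_ne (hf.ne hne) with h | h
  · exact (rankBy_strictMono h).ne hab
  · exact (rankBy_strictMono h).ne' hab

theorem rankBy_eq_add_one [DecidableEq α] (hf : Function.Injective f) {a b : α}
    (h : f b = f a + 1) : rankBy f b = rankBy f a + 1 := by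
  have hset : univ.filter (fun c => f c < f b) = insert a (univ.filter fun c => f c < f a) := by
    ext c
    simp only [mem_filter, mem_univ, true_and, mem_insert, h,
      Nat.lt_succ_iff_lt_or_eq, hf.eq_iff]
    tauto
  rw [rankBy, hset, card_insert_of_notMem (by simp)]
  rfl

end Rank

section Chains

variable {n : ℕ} (r : Fin n → Fin n → Prop)

open Classical in
/-- `chainKey r j = n * (root of the chain of j) + (depth of j)` with depth `< n`, hence injective. -/
noncomputable def chainKey : Fin n → ℕ
  | j => if h : ∃ i, i < j ∧ r i j then chainKey h.choose + 1 else n * j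
  termination_by j => j.val
  decreasing_by exact h.choose_spec.1

variable {r}

theorem chainKey_of_forall_not (j : Fin n) (h : ∀ i, i < j → ¬ r i j) :
    chainKey r j = n * j := by
  rw [chainKey, dif_neg (by simpa using h)]

theorem chainKey_of_rel (hpred : ∀ i i' j, r i j → r i' j → i = i')
    {i j : Fin n} (hlt : i < j) (hij : r i j) : chainKey r j = chainKey r i + 1 := by
  have h : ∃ k, k < j ∧ r k j := ⟨i, hlt, hij⟩
  rw [chainKey, dif_pos h, hpred _ _ _ h.choose_spec.2 hij]

theorem chainKey_mod_le (j : Fin n) : chainKey r j % n ≤ j := by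
  induction j using WellFoundedLT.induction with
  | ind j ih =>
    rw [chainKey]
    split_ifs with h
    · have hi := ih _ h.choose_spec.1
      have hlt : (h.choose : ℕ) < j := h.choose_spec.1
      have hn : (j : ℕ) < n := j.isLt
      rw [Nat.add_mod, Nat.mod_eq_of_lt (a := 1) (by omega), Nat.mod_eq_of_lt (by omega)]
      omega
    · simp

theorem chainKey_mod_of_rel (hpred : ∀ i i' j, r i j → r i' j → i = i')
    {i j : Fin n} (hlt : i < j) (hij : r i j) : chainKey r j % n = chainKey r i % n + 1 := by
  have hi := chainKey_mod_le (r := r) i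
  have hn : (j : ℕ) < n := j.isLt
  have hlt' : (i : ℕ) < j := hlt
  rw [chainKey_of_rel hpred hlt hij, Nat.add_mod, Nat.mod_eq_of_lt (a := 1) (by omega),
    Nat.mod_eq_of_lt (by omega)]

theorem chainKey_mod_eq_zero_iff (hpred : ∀ i i' j, r i j → r i' j → i = i') (j : Fin n) :
    chainKey r j % n = 0 ↔ ∀ i, i < j → ¬ r i j := by
  by_cases h : ∃ i, i < j ∧ r i j
  · obtain ⟨i, hij, hr⟩ := h
    simpa [chainKey_mod_of_rel hpred hij hr] using ⟨i, hij, hr⟩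
  · push Not at h
    simpa [chainKey_of_forall_not j h] using h

theorem chainKey_injective (hpred : ∀ i i' j, r i j → r i' j → i = i')
    (hsucc : ∀ i j j', r i j → r i j' → j = j') : Function.Injective (chainKey r) := by
  intro i
  induction i using WellFoundedLT.induction with
  | ind i ih =>
    intro j hij
    have hroot : (∀ k, k < i → ¬ r k i) ↔ (∀ k, k < j → ¬ r k j) := by
      rw [← chainKey_mod_eq_zero_iff hpred, ← chainKey_mod_eq_zero_iff hpred, hij]
    by_cases hi : ∀ k, k < i → ¬ r k i
    · rw [chainKey_of_forall_not i hi, chainKey_of_forall_not j (hroot.mp hi)] at hij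
      exact Fin.ext (Nat.eq_of_mul_eq_mul_left i.pos hij)
    · obtain ⟨k, hki, hk⟩ : ∃ k, k < i ∧ r k i := by simpa using hi
      obtain ⟨l, hlj, hl⟩ : ∃ l, l < j ∧ r l j := by simpa using mt hroot.mpr hi
      rw [chainKey_of_rel hpred hki hk, chainKey_of_rel hpred hlj hl, add_left_inj] at hij
      obtain rfl := ih k hki hij
      exact hsucc k i j hk hl

theorem exists_perm_succ_of_rel (hlt : ∀ i j, r i j → i < j)
    (hpred : ∀ i i' j, r i j → r i' j → i = i') (hsucc : ∀ i j j', r i j → r i j' → j = j') :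
    ∃ w : Equiv.Perm (Fin n), ∀ i j, r i j → (w j : ℕ) = w i + 1 := by
  have hinj := chainKey_injective hpred hsucc
  let w : Fin n → Fin n := fun i => ⟨rankBy (chainKey r) i, by
    simpa using rankBy_lt_card (f := chainKey r) i⟩
  have hw : Function.Injective w := fun i j h => rankBy_injective hinj (Fin.val_eq_of_eq h)
  exact ⟨Equiv.ofBijective w (Finite.injective_iff_bijective.mp hw), fun i j hij =>
    rankBy_eq_add_one hinj (chainKey_of_rel hpred (hlt i j hij) hij)⟩

end Chains

theorem Matrix.diagonal_inv_mul_mul_diagonal_eq_smul {ι K : Type*} [Fintype ι] [DecidableEq ι]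
    [Field K] {X : Matrix ι ι K} {d : ι → K} {t : K} (hd : ∀ i, d i ≠ 0)
    (h : ∀ i j, X i j ≠ 0 → d j = t * d i) :
    (Matrix.diagonal d)⁻¹ * X * Matrix.diagonal d = t • X := by
  have hcomm : X * Matrix.diagonal d = Matrix.diagonal d * (t • X) := by
    ext i j
    rw [Matrix.mul_diagonal, Matrix.diagonal_mul, Matrix.smul_apply, smul_eq_mul]
    by_cases hx : X i j = 0
    · simp [hx]
    · rw [h i j hx]
      ring
  have hdet : IsUnit (Matrix.diagonal d).det := by
    simp [Matrix.det_diagonal, prod_ne_zero_iff, hd]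
  rw [mul_assoc, hcomm, ← mul_assoc, Matrix.nonsing_inv_mul _ hdet, one_mul]

theorem smul_mem_hessSpace {n : ℕ} {h : Fin n → Fin n} {M : Matrix (Fin n) (Fin n) ℂ}
    (c : ℂ) (hM : M ∈ hessSpace h) : c • M ∈ hessSpace h := by
  intro i j hij
  simp [hM i j hij]

/-- For `X` skeletal nilpotent there is a permutation `w` of `{1,…,n}`
such that, with `s_w(t) = diag(t^{w(1)}, …, t^{w(n)})`, one has
`s_w(t)⁻¹ X s_w(t) = t • X` for all `t ∈ ℂ*`; consequently every Hessenberg variety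
`H(X,H)` is stable under the subtorus `{s_w(t) : t ∈ ℂ*}`. -/
theorem stmt2 {n : ℕ} (X : Matrix (Fin n) (Fin n) ℂ) (hX : Skeletal X) :
    ∃ w : Equiv.Perm (Fin n),
      (∀ t : ℂ, t ≠ 0 →
        (Matrix.diagonal (fun i => t ^ ((w i : ℕ) + 1)))⁻¹ * X *
          Matrix.diagonal (fun i => t ^ ((w i : ℕ) + 1)) = t • X) ∧
      (∀ h : Fin n → Fin n, (∀ i, i ≤ h i) → Monotone h →
        ∀ t : ℂ, t ≠ 0 → ∀ g : Matrix (Fin n) (Fin n) ℂ, IsUnit g →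
          g⁻¹ * X * g ∈ hessSpace h →
          (Matrix.diagonal (fun i => t ^ ((w i : ℕ) + 1)) * g)⁻¹ * X *
            (Matrix.diagonal (fun i => t ^ ((w i : ℕ) + 1)) * g) ∈ hessSpace h) := by
  obtain ⟨w, hw⟩ := exists_perm_succ_of_rel (r := fun i j => X i j ≠ 0)
    (fun i j hij => not_le.mp fun h => hij (hX.1 i j h)) hX.2.2 hX.2.1
  have hconj : ∀ t : ℂ, t ≠ 0 →
      (Matrix.diagonal (fun i => t ^ ((w i : ℕ) + 1)))⁻¹ * X *
        Matrix.diagonal (fun i => t ^ ((w i : ℕ) + 1)) = t • X := fun t ht =>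
    Matrix.diagonal_inv_mul_mul_diagonal_eq_smul (fun i => pow_ne_zero _ ht)
      fun i j hij => by rw [hw i j hij]; ring
  refine ⟨w, hconj, fun h _ _ t ht g _ hg => ?_⟩
  have hscale : (Matrix.diagonal (fun i => t ^ ((w i : ℕ) + 1)) * g)⁻¹ * X *
      (Matrix.diagonal (fun i => t ^ ((w i : ℕ) + 1)) * g) = t • (g⁻¹ * X * g) := by
    rw [Matrix.mul_inv_rev, ← smul_mul_assoc, ← mul_smul_comm, ← hconj t ht]
    simp only [mul_assoc]
  rw [hscale]
  exact smul_mem_hessSpace t hg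
end

section
/- Let X be an n×n skeletal nilpotent matrix and let w be a permutation of {1,…,n} such that s_w(t)⁻¹ X s_w(t) = t·X for all t ∈ ℂ*, where s_w(t) = diag(t^{w(1)}, …, t^{w(n)}). Then for every Hessenberg space H, the set of cosets {gB ∈ G/B : g⁻¹ X g ∈ H and, for all t ∈ ℂ*, g⁻¹ s_w(t) g ∈ B} is finite; that is, the subtorus {s_w(t) : t ∈ ℂ*} acts on H(X,H) with isolated (finitely many) fixed points. -/
/-- Upper-triangular: all entries strictly below the diagonal vanish.  A coset `gB`
equals `fB` exactly when `g⁻¹ * f` is (invertible and) upper-triangular. -/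
def UT {n : ℕ} (M : Matrix (Fin n) (Fin n) ℂ) : Prop :=
  ∀ i j : Fin n, j < i → M i j = 0

/-!
Since `w` is a permutation, the exponents of `s_w(t)` are pairwise distinct, so the span of
`{s_w(t) : t ≠ 0}` contains every diagonal idempotent `E_kk`. A fixed coset `gB` is therefore
fixed by all of `T`: each rank-one matrix `g⁻¹ E_kk g`, with entries `g⁻¹ i k * g k j`, is
upper triangular. Its diagonal sums to `1` and, by triangularity, has a single nonzero entry,
at position `σ k`; then `σ` is a permutation and `g⁻¹ * P_σ` is upper triangular, so every fixed
coset is one of the `n!` permutation cosets.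
-/

open Matrix Polynomial Finset

theorem eq_zero_of_sum_mul_pow_eq_zero {R ι : Type*} [CommRing R] [IsDomain R] [Infinite R]
    [Fintype ι] {e : ι → ℕ} (he : Function.Injective e) {c : ι → R}
    (hc : ∀ t : R, t ≠ 0 → ∑ k, c k * t ^ e k = 0) (k : ι) : c k = 0 := by
  classical
  have hp : ∑ k, C (c k) * X ^ e k = 0 := by
    refine eq_zero_of_infinite_isRoot _ ((Set.finite_singleton 0).infinite_compl.mono ?_)
    intro t ht
    simpa [IsRoot, eval_finsetSum] using hc t ht
  simpa [finsetSum_coeff, coeff_X_pow, he.eq_iff] using congrArg (coeff · (e k)) hp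

namespace Matrix

variable {ι R : Type*}

theorem mul_diagonal_mul_apply [Fintype ι] [DecidableEq ι] [CommSemiring R]
    (A B : Matrix ι ι R) (d : ι → R) (i j : ι) :
    (A * diagonal d * B) i j = ∑ k, A i k * B k j * d k := by
  rw [mul_apply]
  exact sum_congr rfl fun k _ => by rw [mul_diagonal]; ring

theorem mul_mul_eq_zero_of_forall_blockTriangular_conj_diagonal_pow [LinearOrder ι] [Fintype ι]
    [CommRing R] [IsDomain R] [Infinite R] {A B : Matrix ι ι R} {e : ι → ℕ}
    (he : Function.Injective e)
    (hAB : ∀ t : R, t ≠ 0 → (A * diagonal (fun k => t ^ e k) * B).BlockTriangular id)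
    {i j : ι} (hji : j < i) (k : ι) : A i k * B k j = 0 :=
  eq_zero_of_sum_mul_pow_eq_zero he
    (fun t ht => (mul_diagonal_mul_apply A B _ i j).symm.trans (hAB t ht hji)) k

theorem exists_mul_ne_zero_of_mul_eq_one [Fintype ι] [DecidableEq ι] [NonAssocSemiring R]
    [Nontrivial R] {A B : Matrix ι ι R} (hAB : A * B = 1) (i : ι) :
    ∃ k, A i k * B k i ≠ 0 := by
  obtain ⟨k, -, hk⟩ := exists_ne_zero_of_sum_ne_zero (s := univ) (f := fun k => A i k * B k i)
    (by rw [← mul_apply, hAB, one_apply_eq]; exact one_ne_zero)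
  exact ⟨k, hk⟩

theorem eq_of_mul_mul_ne_zero [LinearOrder ι] [MulZeroClass R] [NoZeroDivisors R]
    {A B : Matrix ι ι R}
    (hAB : ∀ i j k, j < i → A i k * B k j = 0) {k i i' : ι} (hi : A i k * B k i ≠ 0)
    (hi' : A i' k * B k i' ≠ 0) : i = i' := by
  by_contra hne
  rcases lt_or_gt_of_ne hne with hlt | hlt
  · exact mul_ne_zero (left_ne_zero_of_mul hi') (right_ne_zero_of_mul hi) (hAB i' i k hlt)
  · exact mul_ne_zero (left_ne_zero_of_mul hi) (right_ne_zero_of_mul hi') (hAB i i' k hlt)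

theorem exists_perm_blockTriangular_mul_permMatrix [LinearOrder ι] [Fintype ι] [CommRing R]
    [NoZeroDivisors R] [Nontrivial R] {A B : Matrix ι ι R}
    (hAB : ∀ i j k, j < i → A i k * B k j = 0) (hA : A * B = 1) (hB : B * A = 1) :
    ∃ σ : Equiv.Perm ι, (A * σ.permMatrix R).BlockTriangular id := by
  have hdiag : ∀ k, ∃ i, A i k * B k i ≠ 0 := fun k => by
    simpa only [mul_comm (B _ _)] using exists_mul_ne_zero_of_mul_eq_one hB k
  choose φ hφ using hdiag
  have hsurj : Function.Surjective φ := fun i => by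
    obtain ⟨k, hk⟩ := exists_mul_ne_zero_of_mul_eq_one hA i
    exact ⟨k, eq_of_mul_mul_ne_zero hAB (hφ k) hk⟩
  let σ := Equiv.ofBijective φ ⟨Finite.injective_iff_surjective.mpr hsurj, hsurj⟩
  refine ⟨σ, fun i j hji => ?_⟩
  obtain ⟨k, rfl⟩ := σ.surjective j
  -- the nonzero pivot `B k (σ k)` forces `A i k = 0` for every row `i` below `σ k`
  have hpivot : B k (σ k) ≠ 0 := right_ne_zero_of_mul (hφ k)
  simpa [PEquiv.mul_toMatrix_toPEquiv, hpivot] using hAB i (σ k) k hji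

theorem isUnit_permMatrix [Fintype ι] [DecidableEq ι] [CommRing R] (σ : Equiv.Perm ι) :
    IsUnit (σ.permMatrix R) := by
  simpa using (Group.isUnit σ⁻¹).map (permMatrixHom (n := ι) (R := R))

end Matrix

theorem stmt3_general {n : ℕ} (X : Matrix (Fin n) (Fin n) ℂ)
    (w : Equiv.Perm (Fin n))
    (h : Fin n → Fin n) :
    ∃ F : Finset (Matrix (Fin n) (Fin n) ℂ),
      ∀ g : Matrix (Fin n) (Fin n) ℂ, IsUnit g → g⁻¹ * X * g ∈ hessSpace h →
        (∀ t : ℂ, t ≠ 0 →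
          UT (g⁻¹ * (Matrix.diagonal fun i => t ^ ((w i : ℕ) + 1)) * g)) →
        ∃ f ∈ F, IsUnit f ∧ UT (g⁻¹ * f) := by
  refine ⟨univ.image fun σ : Equiv.Perm (Fin n) => σ.permMatrix ℂ, fun g hg _ hfix => ?_⟩
  have hdet : IsUnit g.det := (isUnit_iff_isUnit_det g).mp hg
  have hexp : Function.Injective fun i => (w i : ℕ) + 1 := fun i j hij =>
    w.injective (Fin.val_injective (Nat.succ_injective hij))
  obtain ⟨σ, hσ⟩ := exists_perm_blockTriangular_mul_permMatrix
    (fun i j k hji => mul_mul_eq_zero_of_forall_blockTriangular_conj_diagonal_pow hexp hfix hji k)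
    (nonsing_inv_mul g hdet) (mul_nonsing_inv g hdet)
  exact ⟨_, mem_image_of_mem _ (mem_univ σ), isUnit_permMatrix σ, hσ⟩

/-- Let `X` be skeletal nilpotent and `w` a permutation with
`s_w(t)⁻¹ X s_w(t) = t • X` for all `t ∈ ℂ*`, where `s_w(t) = diag(t^{w(i)})_i`.
Then for every Hessenberg space the set of cosets `gB` with `g⁻¹ X g ∈ H` that are
fixed by the subtorus `{s_w(t)}` (i.e. `g⁻¹ s_w(t) g ∈ B` for all `t ∈ ℂ*`) is
finite: there is a finite set `F` of invertible matrices such that every such `g`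
lies in the coset `fB` of some `f ∈ F`. -/
theorem stmt3 {n : ℕ} (X : Matrix (Fin n) (Fin n) ℂ) (hX : Skeletal X)
    (w : Equiv.Perm (Fin n))
    (hw : ∀ t : ℂ, t ≠ 0 →
      (Matrix.diagonal fun i => t ^ ((w i : ℕ) + 1))⁻¹ * X *
        (Matrix.diagonal fun i => t ^ ((w i : ℕ) + 1)) = t • X)
    (h : Fin n → Fin n) (hh1 : ∀ i, i ≤ h i) (hh2 : Monotone h) :
    ∃ F : Finset (Matrix (Fin n) (Fin n) ℂ),
      ∀ g : Matrix (Fin n) (Fin n) ℂ, IsUnit g → g⁻¹ * X * g ∈ hessSpace h →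
        (∀ t : ℂ, t ≠ 0 →
          UT (g⁻¹ * (Matrix.diagonal fun i => t ^ ((w i : ℕ) + 1)) * g)) →
        ∃ f ∈ F, IsUnit f ∧ UT (g⁻¹ * f) :=
  stmt3_general X w h
end

section
/- Let X be an n×n skeletal nilpotent matrix whose nonzero rows are exactly i_1 < i_2 < ⋯ < i_k. Let t = diag(t_1,…,t_n) ∈ T satisfy t_{i_1}⁻¹ t_{X(i_1)} = t_{i_2}⁻¹ t_{X(i_2)} = ⋯ = t_{i_k}⁻¹ t_{X(i_k)}. Then t⁻¹ X t = c·X, where c is the common value of these ratios; consequently, for every linear subspace H of Mat_n(ℂ) and every g ∈ GL(n,ℂ), g⁻¹ X g ∈ H if and only if (tg)⁻¹ X (tg) ∈ H. In particular the Hessenberg variety H(X,H) is K-stable for the subtorus K = {t ∈ T : t_{i_1}⁻¹ t_{X(i_1)} = ⋯ = t_{i_k}⁻¹ t_{X(i_k)}}. -/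
/-! Conjugation by `diagonal t` multiplies the entry `X i j` by `(t i)⁻¹ * t j`. If this ratio
is one number `c` on the whole support of `X`, the conjugate is `c • X`, hence
`(t g)⁻¹ X (t g) = c • g⁻¹ X g`; since `c ≠ 0`, both lie in the same subspaces. -/

namespace Matrix

variable {ι K : Type*} [Field K]

theorem exists_ne_zero_ratio_eq_on_support {X : Matrix ι ι K} {t : ι → K} (ht : ∀ i, t i ≠ 0)
    (hK : ∀ i i' j j', X i j ≠ 0 → X i' j' ≠ 0 → (t i)⁻¹ * t j = (t i')⁻¹ * t j') :
    ∃ c ≠ 0, ∀ i j, X i j ≠ 0 → (t i)⁻¹ * t j = c := by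
  by_cases hX : ∃ i j, X i j ≠ 0
  · obtain ⟨i₀, j₀, h₀⟩ := hX
    exact ⟨(t i₀)⁻¹ * t j₀, mul_ne_zero (inv_ne_zero (ht i₀)) (ht j₀),
      fun i j h => hK i i₀ j j₀ h h₀⟩
  · push Not at hX
    exact ⟨1, one_ne_zero, fun i j h => absurd (hX i j) h⟩

variable [Fintype ι] [DecidableEq ι]

theorem diagonal_inv_mul_mul_diagonal_eq_smul_s4 {X : Matrix ι ι K} {t : ι → K}
    (ht : ∀ i, t i ≠ 0) {c : K} (hc : ∀ i j, X i j ≠ 0 → (t i)⁻¹ * t j = c) :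
    (diagonal t)⁻¹ * X * diagonal t = c • X := by
  have hunit : IsUnit (diagonal t).det := by
    rw [← isUnit_iff_isUnit_det, isUnit_diagonal, Pi.isUnit_iff]
    exact fun i => (ht i).isUnit
  have hcomm : X * diagonal t = diagonal t * (c • X) := by
    ext i j
    simp only [mul_diagonal, diagonal_mul, smul_apply, smul_eq_mul]
    by_cases h : X i j = 0
    · simp [h]
    · rw [← hc i j h, ← mul_assoc, ← mul_assoc, mul_inv_cancel₀ (ht i), one_mul, mul_comm]
  rw [Matrix.mul_assoc, hcomm, ← Matrix.mul_assoc, nonsing_inv_mul _ hunit, Matrix.one_mul]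

end Matrix

theorem stmt4_general {n k : ℕ} (X : Matrix (Fin n) (Fin n) ℂ)
    (ι : Fin k → Fin n)
    (t : Fin n → ℂ) (ht : ∀ i, t i ≠ 0)
    (hK : ∀ i i' j j' : Fin n, X i j ≠ 0 → X i' j' ≠ 0 →
      (t i)⁻¹ * t j = (t i')⁻¹ * t j') :
    (∃ c : ℂ, (∀ (a : Fin k) (j : Fin n), X (ι a) j ≠ 0 → c = (t (ι a))⁻¹ * t j) ∧
      (Matrix.diagonal t)⁻¹ * X * Matrix.diagonal t = c • X) ∧
    ∀ (H : Submodule ℂ (Matrix (Fin n) (Fin n) ℂ)) (g : Matrix (Fin n) (Fin n) ℂ),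
      IsUnit g →
      (g⁻¹ * X * g ∈ H ↔
        (Matrix.diagonal t * g)⁻¹ * X * (Matrix.diagonal t * g) ∈ H) := by
  obtain ⟨c, hc₀, hc⟩ := Matrix.exists_ne_zero_ratio_eq_on_support ht hK
  have hconj := Matrix.diagonal_inv_mul_mul_diagonal_eq_smul_s4 ht hc
  refine ⟨⟨c, fun a j h => (hc _ _ h).symm, hconj⟩, fun H g _ => ?_⟩
  have hshift : (Matrix.diagonal t * g)⁻¹ * X * (Matrix.diagonal t * g)
      = g⁻¹ * ((Matrix.diagonal t)⁻¹ * X * Matrix.diagonal t) * g := by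
    simp only [Matrix.mul_inv_rev, Matrix.mul_assoc]
  rw [hshift, hconj, Matrix.mul_smul, Matrix.smul_mul, H.smul_mem_iff hc₀]

/-- Let `X` be skeletal nilpotent whose nonzero rows are exactly
`ι 0 < ι 1 < ⋯ < ι (k-1)`, and let `t = diag(t_1,…,t_n)` satisfy
`t_i⁻¹ t_{X(i)} = t_{i'}⁻¹ t_{X(i')}` over all nonzero rows `i, i'`.  Then
`t⁻¹ X t = c • X` where `c` is the common value of the ratios; consequently for
every linear subspace `H` and every `g ∈ GL(n,ℂ)`, `g⁻¹ X g ∈ H` iff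
`(tg)⁻¹ X (tg) ∈ H`.  In particular `H(X,H)` is stable under the subtorus `K`
of such `t`. -/
theorem stmt4 {n k : ℕ} (X : Matrix (Fin n) (Fin n) ℂ) (hX : Skeletal X)
    (ι : Fin k → Fin n) (hι : StrictMono ι)
    (hrows : ∀ i : Fin n, (∃ j, X i j ≠ 0) ↔ ∃ a, ι a = i)
    (t : Fin n → ℂ) (ht : ∀ i, t i ≠ 0)
    (hK : ∀ i i' j j' : Fin n, X i j ≠ 0 → X i' j' ≠ 0 →
      (t i)⁻¹ * t j = (t i')⁻¹ * t j') :
    (∃ c : ℂ, (∀ (a : Fin k) (j : Fin n), X (ι a) j ≠ 0 → c = (t (ι a))⁻¹ * t j) ∧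
      (Matrix.diagonal t)⁻¹ * X * Matrix.diagonal t = c • X) ∧
    ∀ (H : Submodule ℂ (Matrix (Fin n) (Fin n) ℂ)) (g : Matrix (Fin n) (Fin n) ℂ),
      IsUnit g →
      (g⁻¹ * X * g ∈ H ↔
        (Matrix.diagonal t * g)⁻¹ * X * (Matrix.diagonal t * g) ∈ H) :=
  stmt4_general X ι t ht hK
end

section
/- Let 1 ≤ k ≤ n−1 and let H be the Hessenberg space of the Hessenberg function with h(j) = n−1 for all j < n and h(n) = n. Then the Hessenberg variety H(F_k, H) is T-stable: for every invertible diagonal matrix t and every g ∈ GL(n,ℂ), if g⁻¹ F_k g ∈ H then (tg)⁻¹ F_k (tg) ∈ H. -/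
/-- The Hessenberg space for the Hessenberg function with `h(j) = n-1` for `j < n`
and `h(n) = n` (1-based): the only vanishing conditions are `M_{n,j} = 0` for
`j < n`, i.e. (0-based) `M i j = 0` for `i = n-1` and `j < n-1`. -/
def Hlast (n : ℕ) : Set (Matrix (Fin n) (Fin n) ℂ) :=
  {M | ∀ i j : Fin n, (i : ℕ) = n - 1 → (j : ℕ) < n - 1 → M i j = 0}

/-!
If `g⁻¹ F g` lies in `H`, the last row of `g⁻¹ F g` is a multiple of the last unit vector,
so the last row `v` of `g⁻¹` is a left eigenvector of `F`. As `F` is strictly upper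
triangular, hence nilpotent, the eigenvalue is `0`: `v F = 0`, i.e. `v` vanishes on the
first `k` coordinates. The last row of `(t g)⁻¹ = g⁻¹ t⁻¹` is `v t⁻¹`, which vanishes on
the same coordinates, so the last row of `(t g)⁻¹ F (t g)` is zero.
-/

open Matrix

namespace Matrix

variable {ι K : Type*} [Fintype ι] [DecidableEq ι]

theorem pow_card_eq_zero_of_isStrictUpperTriangular [LinearOrder ι] [CommRing K]
    {M : Matrix ι ι K} (hM : ∀ i j, j ≤ i → M i j = 0) : M ^ Fintype.card ι = 0 := by
  have hupper : M.IsUpperTriangular := fun i j hji => hM i j hji.le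
  have hcharpoly : M.charpoly = Polynomial.X ^ Fintype.card ι := by
    simp [charpoly_of_isUpperTriangular M hupper, hM _ _ le_rfl]
  simpa [hcharpoly] using aeval_self_charpoly M

theorem vecMul_eq_zero_of_vecMul_eq_smul [Field K] {X : Matrix ι ι K} (hX : IsNilpotent X)
    {v : ι → K} {c : K} (hv : v ᵥ* X = c • v) : v ᵥ* X = 0 := by
  obtain ⟨m, hm⟩ := hX
  have hpow : ∀ p : ℕ, v ᵥ* X ^ p = c ^ p • v := by
    intro p
    induction p with
    | zero => simp
    | succ p ih => rw [pow_succ, ← vecMul_vecMul, ih, smul_vecMul, hv, smul_smul, pow_succ]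
  have : c ^ m • v = 0 := by rw [← hpow, hm, vecMul_zero]
  rcases smul_eq_zero.mp this with hc | rfl
  · rw [hv, eq_zero_of_pow_eq_zero hc, zero_smul]
  · exact zero_vecMul X

end Matrix

theorem mem_Hlast_of_vecMul_eq_zero {n : ℕ} (A X B : Matrix (Fin n) (Fin n) ℂ)
    (h : ∀ i : Fin n, (i : ℕ) = n - 1 → A i ᵥ* X = 0) : A * X * B ∈ Hlast n := by
  intro i j hi _
  rw [mul_apply_eq_vecMul, mul_apply_eq_vecMul, h i hi, zero_vecMul, Pi.zero_apply]

theorem exists_vecMul_eq_smul_of_conj_mem_Hlast {n : ℕ} {X g : Matrix (Fin n) (Fin n) ℂ}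
    (hg : IsUnit g) (h : g⁻¹ * X * g ∈ Hlast n) (i : Fin n) (hi : (i : ℕ) = n - 1) :
    ∃ c : ℂ, g⁻¹ i ᵥ* X = c • g⁻¹ i := by
  set c := (g⁻¹ * X * g) i i
  refine ⟨c, ?_⟩
  have hrow : (g⁻¹ * X * g) i = Pi.single i c := by
    funext j
    rcases eq_or_ne j i with rfl | hji
    · rw [Pi.single_eq_same]
    · rw [Pi.single_eq_of_ne hji]
      exact h i j hi (by omega)
  calc g⁻¹ i ᵥ* X = (g⁻¹ * X * g * g⁻¹) i := by
        rw [mul_nonsing_inv_cancel_right _ _ ((isUnit_iff_isUnit_det g).mp hg)]; rfl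
    _ = _ := by rw [mul_apply_eq_vecMul, hrow, single_vecMul]; rfl

theorem Fmat_isNilpotent {n k : ℕ} (hk : k < n) : IsNilpotent (Fmat n k) :=
  ⟨_, pow_card_eq_zero_of_isStrictUpperTriangular fun i j hji => by
    simp only [Fmat, of_apply]
    rw [if_neg]
    rintro ⟨_, hj⟩
    exact absurd hji (by rw [Fin.le_def]; omega)⟩

theorem vecMul_Fmat_eq_zero_iff {n k : ℕ} (v : Fin n → ℂ) :
    v ᵥ* Fmat n k = 0 ↔ ∀ i : Fin n, (i : ℕ) < k → v i = 0 := by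
  constructor
  · intro h i hi
    have hij := congrFun h ⟨n - k + i, by omega⟩
    rw [vecMul, dotProduct, Finset.sum_eq_single i] at hij
    · simpa [Fmat, hi] using hij
    · intro l _ hl
      simp only [Fmat, of_apply]
      rw [if_neg, mul_zero]
      rintro ⟨_, hl'⟩
      exact hl (Fin.ext (by simp only [Nat.add_left_cancel_iff] at hl'; omega))
    · simp
  · intro h
    funext j
    simp only [vecMul, dotProduct, Pi.zero_apply]
    refine Finset.sum_eq_zero fun l _ => ?_
    by_cases hl : (l : ℕ) < k
    · rw [h l hl, zero_mul]
    · simp [Fmat, hl]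

theorem stmt6_general {n k : ℕ} (hn : 2 ≤ n) (hk2 : k ≤ n - 1)
    (t : Fin n → ℂ)
    (g : Matrix (Fin n) (Fin n) ℂ) (hg : IsUnit g)
    (hmem : g⁻¹ * Fmat n k * g ∈ Hlast n) :
    (Matrix.diagonal t * g)⁻¹ * Fmat n k * (Matrix.diagonal t * g) ∈ Hlast n := by
  have hlast_row : ∀ i : Fin n, (i : ℕ) = n - 1 → g⁻¹ i ᵥ* Fmat n k = 0 := fun i hi =>
    have ⟨_, hc⟩ := exists_vecMul_eq_smul_of_conj_mem_Hlast hg hmem i hi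
    vecMul_eq_zero_of_vecMul_eq_smul (Fmat_isNilpotent (Nat.lt_of_le_sub_one (by omega) hk2)) hc
  rw [Matrix.mul_inv_rev, inv_diagonal]
  refine mem_Hlast_of_vecMul_eq_zero _ _ _ fun i hi => ?_
  rw [mul_apply_eq_vecMul, vecMul_Fmat_eq_zero_iff]
  intro l hl
  rw [vecMul_diagonal, (vecMul_Fmat_eq_zero_iff _).mp (hlast_row i hi) l hl, zero_mul]

/-- For `1 ≤ k ≤ n-1` and `H` the Hessenberg space with `h(j) = n-1`
for `j < n` and `h(n) = n`, the Hessenberg variety `H(F_k, H)` is `T`-stable. -/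
theorem stmt6 {n k : ℕ} (hn : 2 ≤ n) (hk1 : 1 ≤ k) (hk2 : k ≤ n - 1)
    (t : Fin n → ℂ) (ht : ∀ i, t i ≠ 0)
    (g : Matrix (Fin n) (Fin n) ℂ) (hg : IsUnit g)
    (hmem : g⁻¹ * Fmat n k * g ∈ Hlast n) :
    (Matrix.diagonal t * g)⁻¹ * Fmat n k * (Matrix.diagonal t * g) ∈ Hlast n :=
  stmt6_general hn hk2 t g hg hmem
end

section
/- Let 1 ≤ k ≤ n−1 and let H be the Hessenberg space of the Hessenberg function with h(j) = n−1 for all j < n and h(n) = n. If g ∈ GL(n,ℂ) satisfies g⁻¹ F_k g ∈ H, then each standard basis vector e_1, …, e_k of ℂⁿ lies in the span of the first n−1 columns of g. In particular H(F_k, H) is a proper subset of G/B: there exists g ∈ GL(n,ℂ) with g⁻¹ F_k g ∉ H. -/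
/-!
Since `F_k` is strictly upper triangular, `M = g⁻¹ F_k g` is nilpotent. Membership in `H` says
that the last row of `M` is a multiple of `e_nᵀ`, so `e_nᵀ` is a left eigenvector of the nilpotent
matrix `M` and the last row of `M` vanishes. As `g⁻¹ F_k = M g⁻¹`, so does the last row of
`g⁻¹ F_k`, whose entries in columns `n-k+1, …, n` are `(g⁻¹)_{n,1}, …, (g⁻¹)_{n,k}`. Hence for
`i ≤ k` the expansion `e_i = g (g⁻¹ e_i)` in the columns of `g` gives the last column coefficient
zero. For the second claim, the permutation matrix `g` of the transposition `(1 n)` has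
`(g⁻¹)_{n,1} = 1`.
-/

open Matrix

namespace Matrix

variable {ι K : Type*} [Fintype ι]

theorem isNilpotent_of_isUpperTriangular [DecidableEq ι] [LinearOrder ι] {R : Type*} [CommRing R]
    {M : Matrix ι ι R} (hM : M.IsUpperTriangular) (hdiag : ∀ i, M i i = 0) : IsNilpotent M := by
  refine ⟨Fintype.card ι, ?_⟩
  have hchar : M.charpoly = Polynomial.X ^ Fintype.card ι := by
    simp [charpoly_of_isUpperTriangular M hM, hdiag]
  simpa [hchar] using aeval_self_charpoly M

theorem isNilpotent_inv_mul_mul [DecidableEq ι] {R : Type*} [CommRing R] {g : Matrix ι ι R}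
    (hg : IsUnit g) {A : Matrix ι ι R} (hA : IsNilpotent A) : IsNilpotent (g⁻¹ * A * g) := by
  obtain ⟨u, rfl⟩ := hg
  obtain ⟨m, hm⟩ := hA
  exact ⟨m, by rw [← coe_units_inv, Units.conj_pow', hm, mul_zero, zero_mul]⟩

theorem eq_zero_of_vecMul_eq_smul [DecidableEq ι] [Field K] {M : Matrix ι ι K}
    (hM : IsNilpotent M) {v : ι → K} (hv0 : v ≠ 0) {c : K} (hv : v ᵥ* M = c • v) : c = 0 := by
  obtain ⟨m, hm⟩ := hM
  have hpow : ∀ j : ℕ, v ᵥ* M ^ j = c ^ j • v := by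
    intro j
    induction j with
    | zero => simp
    | succ j ih => rw [pow_succ, ← vecMul_vecMul, ih, smul_vecMul, hv, smul_smul, pow_succ]
  have hzero : c ^ m • v = 0 := by rw [← hpow, hm, vecMul_zero]
  exact (pow_eq_zero_iff'.mp ((smul_eq_zero.mp hzero).resolve_right hv0)).1

theorem mulVec_mem_span_col [CommSemiring K] (g : Matrix ι ι K) {v : ι → K} (p : ι → Prop)
    (hv : ∀ c, ¬ p c → v c = 0) :
    g *ᵥ v ∈ Submodule.span K {w | ∃ c, p c ∧ w = fun r => g r c} := by
  rw [mulVec_eq_sum]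
  refine Submodule.sum_mem _ fun c _ => ?_
  by_cases hc : p c
  · rw [op_smul_eq_smul]
    exact Submodule.smul_mem _ _ (Submodule.subset_span ⟨c, hc, rfl⟩)
  · rw [hv c hc, MulOpposite.op_zero, zero_smul]
    exact Submodule.zero_mem _

end Matrix

theorem mul_Fmat_apply {n k : ℕ} (A : Matrix (Fin n) (Fin n) ℂ) (r : Fin n) {i : Fin n}
    (hi : (i : ℕ) < k) (hj : n - k + (i : ℕ) < n) : (A * Fmat n k) r ⟨n - k + i, hj⟩ = A r i := by
  rw [mul_apply, Finset.sum_eq_single i]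
  · simp [Fmat, hi]
  · intro l _ hl
    simp only [Fmat, of_apply]
    rw [if_neg fun h => hl (Fin.ext (by omega)), mul_zero]
  · simp

theorem row_eq_zero_of_isNilpotent_of_mem_Hlast {n : ℕ} {M : Matrix (Fin n) (Fin n) ℂ}
    (hM : IsNilpotent M) (hH : M ∈ Hlast n) {l : Fin n} (hl : (l : ℕ) = n - 1) : M l = 0 := by
  have hrow : M l = M l l • Pi.single l 1 := by
    funext j
    by_cases hj : j = l
    · subst hj; simp
    · simp [hj, hH l j hl (by omega)]
  have hll : M l l = 0 :=
    eq_zero_of_vecMul_eq_smul (v := Pi.single l 1) hM (by simp)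
      (by rw [single_one_vecMul]; exact hrow)
  rw [hrow, hll, zero_smul]

theorem inv_apply_eq_zero_of_conj_Fmat_mem_Hlast {n k : ℕ} (hk : k < n)
    {g : Matrix (Fin n) (Fin n) ℂ} (hg : IsUnit g) (hH : g⁻¹ * Fmat n k * g ∈ Hlast n)
    {l : Fin n} (hl : (l : ℕ) = n - 1) {i : Fin n} (hi : (i : ℕ) < k) : g⁻¹ l i = 0 := by
  have hrow := row_eq_zero_of_isNilpotent_of_mem_Hlast
    (isNilpotent_inv_mul_mul hg (Fmat_isNilpotent hk)) hH hl
  have hcomm : g⁻¹ * Fmat n k = g⁻¹ * Fmat n k * g * g⁻¹ := by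
    rw [Matrix.mul_assoc _ g, mul_nonsing_inv _ ((isUnit_iff_isUnit_det g).mp hg), Matrix.mul_one]
  rw [← mul_Fmat_apply g⁻¹ l hi (by omega), hcomm, mul_apply]
  simp [hrow]

theorem single_mem_span_col_of_conj_Fmat_mem_Hlast {n k : ℕ} (hk : k < n)
    {g : Matrix (Fin n) (Fin n) ℂ} (hg : IsUnit g) (hH : g⁻¹ * Fmat n k * g ∈ Hlast n)
    {i : Fin n} (hi : (i : ℕ) < k) :
    (Pi.single i 1 : Fin n → ℂ) ∈
      Submodule.span ℂ {v : Fin n → ℂ | ∃ c : Fin n, (c : ℕ) < n - 1 ∧ v = fun r => g r c} := by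
  have hsingle : (Pi.single i 1 : Fin n → ℂ) = g *ᵥ (g⁻¹ *ᵥ Pi.single i 1) := by
    rw [mulVec_mulVec, mul_nonsing_inv _ ((isUnit_iff_isUnit_det g).mp hg), one_mulVec]
  rw [hsingle]
  refine mulVec_mem_span_col g _ fun c hc => ?_
  rw [mulVec_single_one]
  exact inv_apply_eq_zero_of_conj_Fmat_mem_Hlast hk hg hH (by omega) hi

theorem exists_conj_Fmat_not_mem_Hlast {n k : ℕ} (hk1 : 1 ≤ k) (hk : k < n) :
    ∃ g : Matrix (Fin n) (Fin n) ℂ, IsUnit g ∧ g⁻¹ * Fmat n k * g ∉ Hlast n := by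
  let first : Fin n := ⟨0, by omega⟩
  let last : Fin n := ⟨n - 1, by omega⟩
  let P := (Equiv.swap first last).permMatrix ℂ
  have hPP : P * P = 1 := by
    rw [← permMatrix_mul, Equiv.swap_mul_self, permMatrix_one]
  have hP : IsUnit P := IsUnit.of_mul_eq_one _ hPP
  refine ⟨P, hP, fun hH => ?_⟩
  have h := inv_apply_eq_zero_of_conj_Fmat_mem_Hlast hk hP hH (l := last) rfl (i := first)
    (by simp [first]; omega)
  simp [inv_eq_left_inv hPP, P, PEquiv.toMatrix_apply] at h

theorem stmt8_general {n k : ℕ} (hk1 : 1 ≤ k) (hk2 : k ≤ n - 1) :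
    (∀ g : Matrix (Fin n) (Fin n) ℂ, IsUnit g → g⁻¹ * Fmat n k * g ∈ Hlast n →
      ∀ i : Fin n, (i : ℕ) < k →
        (Pi.single i 1 : Fin n → ℂ) ∈ Submodule.span ℂ
          {v : Fin n → ℂ | ∃ c : Fin n, (c : ℕ) < n - 1 ∧ v = fun r => g r c}) ∧
    ∃ g : Matrix (Fin n) (Fin n) ℂ, IsUnit g ∧ g⁻¹ * Fmat n k * g ∉ Hlast n := by
  have hk : k < n := by omega
  exact ⟨fun _ hg hH _ hi => single_mem_span_col_of_conj_Fmat_mem_Hlast hk hg hH hi,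
    exists_conj_Fmat_not_mem_Hlast hk1 hk⟩

/-- With `H` the Hessenberg space for `h(j) = n-1` (`j < n`), `h(n) = n`:
if `g⁻¹ F_k g ∈ H` then each standard basis vector `e_1, …, e_k` lies in the span of
the first `n-1` columns of `g`.  In particular `H(F_k, H)` is a proper subset of
`G/B`: there is an invertible `g` with `g⁻¹ F_k g ∉ H`. -/
theorem stmt8 {n k : ℕ} (hn : 2 ≤ n) (hk1 : 1 ≤ k) (hk2 : k ≤ n - 1) :
    (∀ g : Matrix (Fin n) (Fin n) ℂ, IsUnit g → g⁻¹ * Fmat n k * g ∈ Hlast n →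
      ∀ i : Fin n, (i : ℕ) < k →
        (Pi.single i 1 : Fin n → ℂ) ∈ Submodule.span ℂ
          {v : Fin n → ℂ | ∃ c : Fin n, (c : ℕ) < n - 1 ∧ v = fun r => g r c}) ∧
    ∃ g : Matrix (Fin n) (Fin n) ℂ, IsUnit g ∧ g⁻¹ * Fmat n k * g ∉ Hlast n :=
  stmt8_general hk1 hk2
end

section
/- Let M be an n×m complex matrix whose columns are all nonzero, whose pivot rows piv(M_1), …, piv(M_m) are pairwise distinct, and such that for each column j with pivot row r = piv(M_j), M_{r,j'} = 0 for every column j' > j. Let y ∈ ℂⁿ be nonzero with ℓ = piv(y), and let A, B, v, v' be the pivot matrix, dependent matrix, solution vector and constraint vector of the system (M | y). Then: (1) the pivot matrix A is invertible; (2) the linear system Mx = y has at most one solution x ∈ ℂᵐ; and (3) if Mx = y has a solution, then that solution satisfies x_j = 0 for all columns j ∉ C and (x_j)_{j∈C} = A⁻¹v, and moreover B A⁻¹ v = v'. -/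
/-!
Everything is forward substitution along the pivots. In row `pr j` no column after `j` has a
nonzero entry, so once `x` is known to vanish on the earlier columns that still meet that row,
`(M *ᵥ x) (pr j) = M (pr j) j * x j` determines `x j`. Over all columns this makes `M *ᵥ ·`
injective; over the columns with `pr j > ℓ`, where `y` vanishes and the columns of `C`
have no entries, it shows that a solution is supported on `C`. The pivot matrix is again such a
matrix (with the identity as pivot map), hence invertible, and the equations of `M *ᵥ x = y` in
the pivot rows and in the remaining rows `≤ ℓ` read `A *ᵥ x_C = v` and `B *ᵥ x_C = v'`.
-/

/-- The pivot matrix of the system `(M | y)`: rows and columns are indexed by the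
set `C` of columns of `M` whose pivot row `pr j` satisfies `pr j ≤ ℓ`; the row
indexed by `j ∈ C` is the row of `M` with index the pivot row `pr j` (so the rows
are exactly the pivot rows `R = pr '' C`, enumerated via the bijection `pr : C ≃ R`). -/
def pivotMat {n m : ℕ} (M : Matrix (Fin n) (Fin m) ℂ) (pr : Fin m → Fin n) (ℓ : Fin n) :
    Matrix {j : Fin m // pr j ≤ ℓ} {j : Fin m // pr j ≤ ℓ} ℂ :=
  Matrix.of fun j j' => M (pr j.1) j'.1

/-- The dependent matrix of the system `(M | y)`: rows indexed by the rows `i ≤ ℓ`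
that are not pivot rows of columns in `C`, columns indexed by `C`. -/
def depMat {n m : ℕ} (M : Matrix (Fin n) (Fin m) ℂ) (pr : Fin m → Fin n) (ℓ : Fin n) :
    Matrix {i : Fin n // i ≤ ℓ ∧ ∀ j : Fin m, pr j ≤ ℓ → pr j ≠ i}
           {j : Fin m // pr j ≤ ℓ} ℂ :=
  Matrix.of fun i j => M i.1 j.1

namespace Matrix

section Pivots

variable {ι κ R : Type*} [LinearOrder κ] [Fintype κ] [Semiring R]
  {M : Matrix ι κ R} {pr : κ → ι}

theorem mulVec_apply_pivot_eq {x : κ → R} {j : κ}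
    (hright : ∀ j', j < j' → M (pr j) j' = 0)
    (hleft : ∀ j', j' < j → M (pr j) j' * x j' = 0) :
    (M *ᵥ x) (pr j) = M (pr j) j * x j := by
  refine Finset.sum_eq_single j (fun j' _ hne => ?_) (by simp)
  rcases hne.lt_or_gt with hlt | hgt
  · exact hleft j' hlt
  · exact mul_eq_zero_of_left (hright j' hgt) _

variable [NoZeroDivisors R]

theorem eq_zero_of_mulVec_apply_pivot_eq_zero (hpiv : ∀ j, M (pr j) j ≠ 0)
    (hright : ∀ j j', j < j' → M (pr j) j' = 0) {P : κ → Prop}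
    (hP : ∀ j j', P j → ¬ P j' → M (pr j) j' = 0) {x : κ → R}
    (hx : ∀ j, P j → (M *ᵥ x) (pr j) = 0) : ∀ j, P j → x j = 0 := by
  intro j
  induction j using WellFoundedLT.induction with
  | ind j ih =>
    intro hj
    have hleft : ∀ j', j' < j → M (pr j) j' * x j' = 0 := fun j' hj' => by
      by_cases hPj' : P j'
      · rw [ih j' hj' hPj', mul_zero]
      · rw [hP j j' hj hPj', zero_mul]
    have hrow := hx j hj
    rw [mulVec_apply_pivot_eq (hright j) hleft] at hrow
    exact (mul_eq_zero.1 hrow).resolve_left (hpiv j)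

end Pivots

theorem mulVec_injective_of_pivots {ι κ R : Type*} [LinearOrder κ] [Fintype κ] [Ring R]
    [NoZeroDivisors R] {M : Matrix ι κ R} {pr : κ → ι} (hpiv : ∀ j, M (pr j) j ≠ 0)
    (hright : ∀ j j', j < j' → M (pr j) j' = 0) : Function.Injective M.mulVec := by
  intro x x' h
  have hker : ∀ j, True → (x - x') j = 0 :=
    eq_zero_of_mulVec_apply_pivot_eq_zero hpiv hright (fun _ _ _ hj' => absurd trivial hj')
      fun j _ => by rw [mulVec_sub, h, sub_self, Pi.zero_apply]
  exact sub_eq_zero.1 (funext fun j => hker j trivial)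

theorem submatrix_val_mulVec_of_eq_zero {ι ι' κ R : Type*} [Fintype κ]
    [NonUnitalNonAssocSemiring R]
    (M : Matrix ι κ R) (f : ι' → ι) {p : κ → Prop} [DecidablePred p] {x : κ → R}
    (hx : ∀ j, ¬ p j → x j = 0) :
    M.submatrix f Subtype.val *ᵥ (fun j : {j // p j} => x j) = fun i => (M *ᵥ x) (f i) := by
  funext i
  simp only [mulVec, dotProduct, submatrix_apply]
  rw [← Fintype.sum_subtype_add_sum_subtype p,
    Fintype.sum_eq_zero (fun j : {j // ¬ p j} => M (f i) j * x j)
      (fun j => by rw [hx j j.2, mul_zero]),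
    add_zero]

end Matrix

open Matrix

theorem pivotMat_eq_submatrix {n m : ℕ} (M : Matrix (Fin n) (Fin m) ℂ) (pr : Fin m → Fin n)
    (ℓ : Fin n) : pivotMat M pr ℓ = M.submatrix (fun j => pr j.1) Subtype.val := rfl

theorem depMat_eq_submatrix {n m : ℕ} (M : Matrix (Fin n) (Fin m) ℂ) (pr : Fin m → Fin n)
    (ℓ : Fin n) : depMat M pr ℓ = M.submatrix Subtype.val Subtype.val := rfl

theorem isUnit_pivotMat {n m : ℕ} {M : Matrix (Fin n) (Fin m) ℂ} {pr : Fin m → Fin n}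
    (hpiv : ∀ j, M (pr j) j ≠ 0) (hright : ∀ j j' : Fin m, j < j' → M (pr j) j' = 0)
    (ℓ : Fin n) : IsUnit (pivotMat M pr ℓ) :=
  mulVec_injective_iff_isUnit.1 <|
    mulVec_injective_of_pivots (pr := id) (fun j => hpiv j.1) fun j j' h => hright j.1 j'.1 h

theorem stmt9_general {n m : ℕ} (M : Matrix (Fin n) (Fin m) ℂ) (pr : Fin m → Fin n)
    (hpiv : ∀ j, M (pr j) j ≠ 0) (hbelow : ∀ j i, pr j < i → M i j = 0)
    (hright : ∀ j j' : Fin m, j < j' → M (pr j) j' = 0)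
    (y : Fin n → ℂ) (ℓ : Fin n) (hybelow : ∀ i, ℓ < i → y i = 0) :
    IsUnit (pivotMat M pr ℓ) ∧
    (∀ x x' : Fin m → ℂ, M.mulVec x = y → M.mulVec x' = y → x = x') ∧
    (∀ x : Fin m → ℂ, M.mulVec x = y →
      (∀ j : Fin m, ¬ pr j ≤ ℓ → x j = 0) ∧
      ((fun j : {j : Fin m // pr j ≤ ℓ} => x j.1) =
        (pivotMat M pr ℓ)⁻¹.mulVec (fun j => y (pr j.1))) ∧
      ((depMat M pr ℓ).mulVec ((pivotMat M pr ℓ)⁻¹.mulVec (fun j => y (pr j.1))) =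
        fun i => y i.1)) := by
  have hA := isUnit_pivotMat hpiv hright ℓ
  refine ⟨hA, fun x x' hx hx' => mulVec_injective_of_pivots hpiv hright (hx.trans hx'.symm),
    fun x hx => ?_⟩
  have hsupp : ∀ j, ¬ pr j ≤ ℓ → x j = 0 :=
    eq_zero_of_mulVec_apply_pivot_eq_zero hpiv hright
      (fun j j' hj hj' => hbelow j' (pr j) ((not_not.1 hj').trans_lt (not_le.1 hj)))
      fun j hj => by rw [hx, hybelow _ (not_le.1 hj)]
  have hxC : (fun j : {j : Fin m // pr j ≤ ℓ} => x j.1) =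
      (pivotMat M pr ℓ)⁻¹ *ᵥ fun j => y (pr j.1) := by
    have := hA.invertible
    refine (inv_mulVec_eq_vec ?_).symm
    rw [pivotMat_eq_submatrix, submatrix_val_mulVec_of_eq_zero M _ hsupp, hx]
  refine ⟨hsupp, hxC, ?_⟩
  rw [← hxC, depMat_eq_submatrix, submatrix_val_mulVec_of_eq_zero M _ hsupp, hx]

/-- Let `M` be an `n × m` matrix with nonzero columns, pairwise distinct
pivot rows `pr j` (so `M (pr j) j ≠ 0` and `M i j = 0` for `i > pr j`), vanishing in
each pivot row to the right of the pivot, and let `y ≠ 0` have pivot row `ℓ`.  Then: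
(1) the pivot matrix `A` is invertible; (2) the system `M x = y` has at most one
solution; (3) any solution `x` vanishes outside `C`, restricts on `C` to `A⁻¹ v`
where `v = (y_{pr j})_{j ∈ C}` is the solution vector, and `B A⁻¹ v = v'` where
`v' = (y_i)_{i ≤ ℓ, i ∉ R}` is the constraint vector. -/
theorem stmt9 {n m : ℕ} (M : Matrix (Fin n) (Fin m) ℂ) (pr : Fin m → Fin n)
    (hpiv : ∀ j, M (pr j) j ≠ 0) (hbelow : ∀ j i, pr j < i → M i j = 0)
    (hinj : Function.Injective pr)
    (hright : ∀ j j' : Fin m, j < j' → M (pr j) j' = 0)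
    (y : Fin n → ℂ) (ℓ : Fin n) (hy : y ℓ ≠ 0) (hybelow : ∀ i, ℓ < i → y i = 0) :
    IsUnit (pivotMat M pr ℓ) ∧
    (∀ x x' : Fin m → ℂ, M.mulVec x = y → M.mulVec x' = y → x = x') ∧
    (∀ x : Fin m → ℂ, M.mulVec x = y →
      (∀ j : Fin m, ¬ pr j ≤ ℓ → x j = 0) ∧
      ((fun j : {j : Fin m // pr j ≤ ℓ} => x j.1) =
        (pivotMat M pr ℓ)⁻¹.mulVec (fun j => y (pr j.1))) ∧
      ((depMat M pr ℓ).mulVec ((pivotMat M pr ℓ)⁻¹.mulVec (fun j => y (pr j.1))) =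
        fun i => y i.1)) :=
  stmt9_general M pr hpiv hbelow hright y ℓ hybelow
end

section
/- Let X be an n×n skeletal nilpotent matrix, H a Hessenberg space, g ∈ GL(n,ℂ) in normalized Schubert form with g⁻¹ X g ∈ H, and t = diag(t_1,…,t_n) ∈ T with (tg)⁻¹ X (tg) ∈ H. Then for every column index j with X g_j ≠ 0 the following equation holds. Let ℓ = piv(X g_j); among the first h(j) columns of g, let C_j be the set of columns with pivot row ≤ ℓ and R_j ⊆ {1,…,ℓ} the set of their pivot rows; let A_j = (g_{ic})_{i∈R_j, c∈C_j}, B_j = (g_{ic})_{i≤ℓ, i∉R_j, c∈C_j}, and v_j = ((X g_j)_i)_{i∈R_j}. With the conventions t_0 = 1 and X(i) = 0 when row i of X is zero, let s_j be the diagonal matrix with entries t_{X(i)}/t_i for i ∈ R_j, and s'_j the diagonal matrix with entries t_{X(i)}/t_i for i ≤ ℓ, i ∉ R_j. Then B_j A_j⁻¹ s_j v_j = s'_j B_j A_j⁻¹ v_j. -/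
/-- For `g` in normalized Schubert form with pivot permutation `w` (the pivot row of
column `c` is `w c`), `hj` the last admissible column (0-based `h j`) and `ℓ` the
pivot row of `X g_j`: the pivot matrix `A_j`, square, with rows and columns indexed
by the set `C_j` of admissible columns `c ≤ hj` whose pivot row `w c` is `≤ ℓ`
(rows enumerated via the bijection `c ↦ w c` from `C_j` onto `R_j`). -/
def schubPivot {n : ℕ} (g : Matrix (Fin n) (Fin n) ℂ) (w : Equiv.Perm (Fin n))
    (hj ℓ : Fin n) :
    Matrix {c : Fin n // c ≤ hj ∧ w c ≤ ℓ} {c : Fin n // c ≤ hj ∧ w c ≤ ℓ} ℂ :=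
  Matrix.of fun c c' => g (w c.1) c'.1

/-- The dependent matrix `B_j`: rows indexed by rows `i ≤ ℓ` not in `R_j`, columns
indexed by `C_j`. -/
def schubDep {n : ℕ} (g : Matrix (Fin n) (Fin n) ℂ) (w : Equiv.Perm (Fin n))
    (hj ℓ : Fin n) :
    Matrix {i : Fin n // i ≤ ℓ ∧ ∀ c : Fin n, c ≤ hj → w c ≤ ℓ → w c ≠ i}
           {c : Fin n // c ≤ hj ∧ w c ≤ ℓ} ℂ :=
  Matrix.of fun i c => g i.1 c.1

open Matrix

section PivotSupport

variable {ι R : Type*} [Fintype ι] [LinearOrder ι] [Semiring R]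

lemma eq_zero_of_mulVec_eq_zero_below {g : Matrix ι ι R} {w : Equiv.Perm ι}
    (hw1 : ∀ i, g (w i) i = 1) (hw2 : ∀ i i', w i < i' → g i' i = 0)
    {b : ι → R} {ℓ : ι} (hb : ∀ i, ℓ < i → (g *ᵥ b) i = 0) :
    ∀ c, ℓ < w c → b c = 0 := by
  classical
  by_contra! hcon
  obtain ⟨c₀, hc₀, hb₀⟩ := hcon
  -- Take the offending column with the lowest pivot row: no other column reaches that row.
  obtain ⟨c, hc, hmax⟩ := (Finset.univ.filter fun c => ℓ < w c ∧ b c ≠ 0).exists_max_image w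
    ⟨c₀, by simp [hc₀, hb₀]⟩
  simp only [Finset.mem_filter, Finset.mem_univ, true_and] at hc hmax
  have hpivot : (g *ᵥ b) (w c) = b c := by
    rw [mulVec, dotProduct, Finset.sum_eq_single c, hw1, one_mul]
    · intro c' _ hne
      by_cases hbc' : b c' = 0
      · rw [hbc', mul_zero]
      have hlt : w c' < w c := by
        by_cases hℓc' : ℓ < w c'
        · exact (hmax c' ⟨hℓc', hbc'⟩).lt_of_ne (w.injective.ne hne)
        · exact (not_lt.mp hℓc').trans_lt hc.1
      rw [hw2 c' (w c) hlt, zero_mul]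
    · simp
  exact hc.2 (hpivot ▸ hb _ hc.1)

end PivotSupport

lemma submatrix_val_mulVec_of_support {m m' ι R : Type*} [Fintype ι]
    [NonUnitalNonAssocSemiring R] {p : ι → Prop} [Fintype {c // p c}]
    (M : Matrix m ι R) (e : m' → m) {b : ι → R} (hb : ∀ c, ¬ p c → b c = 0) :
    M.submatrix e Subtype.val *ᵥ (fun c : {c // p c} => b c) = fun i => (M *ᵥ b) (e i) := by
  classical
  funext i
  simp only [mulVec, dotProduct, submatrix_apply]
  rw [← Finset.sum_subtype (Finset.univ.filter p) (by simp) (fun c => M (e i) c * b c)]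
  exact Finset.sum_filter_of_ne fun c _ hne =>
    by_contra fun hpc => hne (by rw [hb c hpc, mul_zero])

lemma diagonal_inv_mul_mul_diagonal {ι K : Type*} [Fintype ι] [DecidableEq ι] [Field K]
    {X : Matrix ι ι K} {t r : ι → K} (ht : ∀ i, t i ≠ 0)
    (hr : ∀ i j, X i j ≠ 0 → r i = t j * (t i)⁻¹) :
    (diagonal t)⁻¹ * X * diagonal t = diagonal r * X := by
  have hinv : (diagonal t)⁻¹ = diagonal fun i => (t i)⁻¹ :=
    inv_eq_left_inv (by simp [diagonal_mul_diagonal, inv_mul_cancel₀ (ht _)])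
  ext i j
  rw [hinv, mul_diagonal, diagonal_mul, diagonal_mul]
  by_cases hX : X i j = 0
  · simp [hX]
  · rw [hr i j hX]
    ring

section SchubertForm

variable {n : ℕ} {g : Matrix (Fin n) (Fin n) ℂ} {w : Equiv.Perm (Fin n)}

lemma det_schubPivot (hw1 : ∀ i, g (w i) i = 1) (hw3 : ∀ i j, i < j → g (w i) j = 0)
    (hj ℓ : Fin n) : (schubPivot g w hj ℓ).det = 1 := by
  rw [det_of_isLowerTriangular (schubPivot g w hj ℓ) fun c c' hlt => hw3 c c' hlt]
  exact Finset.prod_eq_one fun c _ => hw1 c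

lemma schubDep_mulVec_schubPivot_inv_mulVec (hw1 : ∀ i, g (w i) i = 1)
    (hw2 : ∀ i i', w i < i' → g i' i = 0) (hw3 : ∀ i j, i < j → g (w i) j = 0)
    {hj ℓ : Fin n} {b : Fin n → ℂ} (hbh : ∀ c, hj < c → b c = 0)
    (hbℓ : ∀ i, ℓ < i → (g *ᵥ b) i = 0) :
    schubDep g w hj ℓ *ᵥ ((schubPivot g w hj ℓ)⁻¹ *ᵥ fun c => (g *ᵥ b) (w c.1)) =
      fun i => (g *ᵥ b) i.1 := by
  have hsupp : ∀ c, ¬ (c ≤ hj ∧ w c ≤ ℓ) → b c = 0 := fun c hc => by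
    by_cases hc' : c ≤ hj
    · exact eq_zero_of_mulVec_eq_zero_below hw1 hw2 hbℓ c (not_le.mp fun h => hc ⟨hc', h⟩)
    · exact hbh c (not_le.mp hc')
  have hpivot : schubPivot g w hj ℓ *ᵥ (fun c => b c.1) = fun c => (g *ᵥ b) (w c.1) :=
    submatrix_val_mulVec_of_support g _ hsupp
  have hdet : IsUnit (schubPivot g w hj ℓ).det := by
    rw [det_schubPivot hw1 hw3]; exact isUnit_one
  rw [← hpivot, mulVec_mulVec (M := (schubPivot g w hj ℓ)⁻¹), nonsing_inv_mul _ hdet,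
    one_mulVec]
  exact submatrix_val_mulVec_of_support g _ hsupp

lemma schubDep_mulVec_schubPivot_inv_mulVec_of_mem_hessSpace (hg : IsUnit g)
    (hw1 : ∀ i, g (w i) i = 1) (hw2 : ∀ i i', w i < i' → g i' i = 0) (hw3 : ∀ i j, i < j → g (w i) j = 0)
    {h : Fin n → Fin n} {M : Matrix (Fin n) (Fin n) ℂ} (hM : g⁻¹ * M * g ∈ hessSpace h)
    {j ℓ : Fin n} (hℓ : ∀ i, ℓ < i → (M * g) i j = 0) :
    schubDep g w (h j) ℓ *ᵥ ((schubPivot g w (h j) ℓ)⁻¹ *ᵥ fun c => (M * g) (w c.1) j) =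
      fun i => (M * g) i.1 j := by
  have hcol : g *ᵥ (fun c => (g⁻¹ * M * g) c j) = fun i => (M * g) i j := by
    funext i
    rw [← mul_nonsing_inv_cancel_left g (M * g) ((isUnit_iff_isUnit_det g).mp hg),
      ← Matrix.mul_assoc g⁻¹]
    simp only [mulVec, dotProduct, mul_apply]
  have := schubDep_mulVec_schubPivot_inv_mulVec hw1 hw2 hw3 (fun c hc => hM c j hc)
    (by rw [hcol]; exact hℓ)
  rwa [hcol] at this

end SchubertForm

theorem stmt10_general {n : ℕ} (X : Matrix (Fin n) (Fin n) ℂ)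
    (h : Fin n → Fin n)
    (g : Matrix (Fin n) (Fin n) ℂ) (hg : IsUnit g)
    (w : Equiv.Perm (Fin n))
    (hw1 : ∀ i : Fin n, g (w i) i = 1)
    (hw2 : ∀ i i' : Fin n, w i < i' → g i' i = 0)
    (hw3 : ∀ i j : Fin n, i < j → g (w i) j = 0)
    (hmem : g⁻¹ * X * g ∈ hessSpace h)
    (t : Fin n → ℂ) (ht : ∀ i, t i ≠ 0)
    (hmem' : (Matrix.diagonal t * g)⁻¹ * X * (Matrix.diagonal t * g) ∈ hessSpace h)
    (r : Fin n → ℂ)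
    (hr1 : ∀ i j : Fin n, X i j ≠ 0 → r i = t j * (t i)⁻¹)
    (j ℓ : Fin n)
    (hℓ2 : ∀ i : Fin n, ℓ < i → (X * g) i j = 0) :
    (schubDep g w (h j) ℓ).mulVec ((schubPivot g w (h j) ℓ)⁻¹.mulVec
        (fun c => r (w c.1) * (X * g) (w c.1) j)) =
      fun i => r i.1 * ((schubDep g w (h j) ℓ).mulVec
        ((schubPivot g w (h j) ℓ)⁻¹.mulVec (fun c => (X * g) (w c.1) j))) i := by
  have hconj : (diagonal t * g)⁻¹ * X * (diagonal t * g) = g⁻¹ * (diagonal r * X) * g := by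
    rw [← diagonal_inv_mul_mul_diagonal ht hr1, Matrix.mul_inv_rev]
    simp only [Matrix.mul_assoc]
  have hrow : ∀ i, (diagonal r * X * g) i j = r i * (X * g) i j := fun i => by
    rw [Matrix.mul_assoc, diagonal_mul]
  have hX :=
    schubDep_mulVec_schubPivot_inv_mulVec_of_mem_hessSpace hg hw1 hw2 hw3 hmem hℓ2
  have hrX := schubDep_mulVec_schubPivot_inv_mulVec_of_mem_hessSpace hg hw1 hw2 hw3
    (hconj ▸ hmem') (M := diagonal r * X) fun i hi => by rw [hrow, hℓ2 i hi, mul_zero]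
  simp only [hrow] at hrX
  rw [hrX, hX]

/-- Theorem: main column test: Let `X` be skeletal nilpotent, `H` a
Hessenberg space, `g ∈ GL(n,ℂ)` in normalized Schubert form (pivot permutation `w`)
with `g⁻¹ X g ∈ H`, and `t ∈ T` with `(tg)⁻¹ X (tg) ∈ H`.  Let `r i = t_{X(i)}/t_i`
(with the conventions `t_0 = 1` and `X(i) = 0` when row `i` of `X` vanishes).  Then
for every column `j` with `X g_j ≠ 0`, with `ℓ = piv(X g_j)`:
`B_j A_j⁻¹ s_j v_j = s'_j B_j A_j⁻¹ v_j`, where `v_j = ((Xg_j)_{w c})_{c ∈ C_j}`,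
`s_j = diag(r (w c))_{c ∈ C_j}` and `s'_j = diag(r i)_{i ≤ ℓ, i ∉ R_j}`. -/
theorem stmt10 {n : ℕ} (X : Matrix (Fin n) (Fin n) ℂ) (hX : Skeletal X)
    (h : Fin n → Fin n) (hh1 : ∀ i, i ≤ h i) (hh2 : Monotone h)
    (g : Matrix (Fin n) (Fin n) ℂ) (hg : IsUnit g)
    (w : Equiv.Perm (Fin n))
    (hw1 : ∀ i : Fin n, g (w i) i = 1)
    (hw2 : ∀ i i' : Fin n, w i < i' → g i' i = 0)
    (hw3 : ∀ i j : Fin n, i < j → g (w i) j = 0)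
    (hmem : g⁻¹ * X * g ∈ hessSpace h)
    (t : Fin n → ℂ) (ht : ∀ i, t i ≠ 0)
    (hmem' : (Matrix.diagonal t * g)⁻¹ * X * (Matrix.diagonal t * g) ∈ hessSpace h)
    (r : Fin n → ℂ)
    (hr1 : ∀ i j : Fin n, X i j ≠ 0 → r i = t j * (t i)⁻¹)
    (hr2 : ∀ i : Fin n, (∀ j, X i j = 0) → r i = (t i)⁻¹)
    (j ℓ : Fin n)
    (hℓ1 : (X * g) ℓ j ≠ 0) (hℓ2 : ∀ i : Fin n, ℓ < i → (X * g) i j = 0) :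
    (schubDep g w (h j) ℓ).mulVec ((schubPivot g w (h j) ℓ)⁻¹.mulVec
        (fun c => r (w c.1) * (X * g) (w c.1) j)) =
      fun i => r i.1 * ((schubDep g w (h j) ℓ).mulVec
        ((schubPivot g w (h j) ℓ)⁻¹.mulVec (fun c => (X * g) (w c.1) j))) i :=
  stmt10_general X h g hg w hw1 hw2 hw3 hmem t ht hmem' r hr1 j ℓ hℓ2
end

section
/- Let X be an n×n skeletal nilpotent matrix and H a Hessenberg space. Suppose there exists g ∈ GL(n,ℂ) in normalized Schubert form with g⁻¹ X g ∈ H and a column j such that X g_j ≠ 0 and exactly one of the first h(j) columns of g has pivot row ≤ ℓ := piv(X g_j) (i.e., the pivot matrix A_j of the system (g_1 ⋯ g_{h(j)} | X g_j) is 1×1). Then every t = diag(t_1,…,t_n) ∈ T such that H(X,H) is {t}-stable satisfies t_{X(i)}/t_i = t_{X(ℓ)}/t_ℓ for every row i with (X g_j)_i ≠ 0. -/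
open Matrix

structure IsNormalizedSchubert {R : Type*} [Zero R] [One R] {n : ℕ}
    (g : Matrix (Fin n) (Fin n) R) (w : Equiv.Perm (Fin n)) : Prop where
  pivot_eq_one : ∀ c, g (w c) c = 1
  below_pivot : ∀ c r, w c < r → g r c = 0
  right_of_pivot : ∀ c c', c < c' → g (w c) c' = 0

namespace IsNormalizedSchubert

variable {R : Type*} [Semiring R] {n : ℕ} {g : Matrix (Fin n) (Fin n) R} {w : Equiv.Perm (Fin n)}

theorem apply_eq_zero_of_mulVec_eq_zero (hS : IsNormalizedSchubert g w) {ℓ : Fin n}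
    {γ : Fin n → R} (hγ : ∀ r, ℓ < r → (g *ᵥ γ) r = 0) {c : Fin n} (hc : ℓ < w c) : γ c = 0 := by
  suffices ∀ r : Fin n, ∀ c, w c = r → ℓ < r → γ c = 0 from this _ c rfl hc
  intro r
  induction r using WellFoundedGT.induction with
  | _ r ih =>
    rintro c rfl hc
    have hrow := hγ (w c) hc
    rw [mulVec, dotProduct, Finset.sum_eq_single c ?_ (by simp), hS.pivot_eq_one, one_mul] at hrow
    · exact hrow
    intro c' _ hne
    rcases lt_or_gt_of_ne hne with hlt | hlt
    · rcases lt_or_gt_of_ne (w.injective.ne hne) with hw | hw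
      · rw [hS.below_pivot c' (w c) hw, zero_mul]
      · rw [ih (w c') hw c' rfl (hc.trans hw), mul_zero]
    · rw [hS.right_of_pivot c c' hlt, zero_mul]

end IsNormalizedSchubert

theorem mul_apply_eq_of_unique_pivot {n : ℕ} {g M : Matrix (Fin n) (Fin n) ℂ}
    {w : Equiv.Perm (Fin n)} (hS : IsNormalizedSchubert g w) (hg : IsUnit g)
    {h : Fin n → Fin n} (hmem : g⁻¹ * M * g ∈ hessSpace h) {j ℓ c₀ : Fin n}
    (hzero : ∀ r, ℓ < r → (M * g) r j = 0) (hc₀ : ∀ c, c ≤ h j → w c ≤ ℓ → c = c₀) (r : Fin n) :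
    (M * g) r j = g r c₀ * (g⁻¹ * M * g) c₀ j := by
  have hcol : (g *ᵥ fun c => (g⁻¹ * M * g) c j) = fun r => (M * g) r j := by
    ext r
    change (g * (g⁻¹ * M * g)) r j = _
    rw [mul_assoc, mul_nonsing_inv_cancel_left _ _ ((isUnit_iff_isUnit_det g).mp hg)]
  have hβ : ∀ c, c ≠ c₀ → (g⁻¹ * M * g) c j = 0 := by
    intro c hc
    by_cases hj : h j < c
    · exact hmem c j hj
    by_cases hℓ : w c ≤ ℓ
    · exact absurd (hc₀ c (not_lt.mp hj) hℓ) hc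
    exact hS.apply_eq_zero_of_mulVec_eq_zero (γ := fun c => (g⁻¹ * M * g) c j)
      (fun r hr => by rw [hcol]; exact hzero r hr) (not_le.mp hℓ)
  rw [← congrFun hcol r, mulVec, dotProduct,
    Finset.sum_eq_single c₀ (fun c _ hc => by rw [hβ c hc, mul_zero]) (by simp)]

theorem diagonal_mul_mul_diagonal_mul_apply {R ι : Type*} [CommSemiring R] [Fintype ι]
    [DecidableEq ι] {s t : ι → R} {X g : Matrix ι ι R} {i a : ι}
    (hrow : ∀ k, k ≠ a → X i k = 0) (j : ι) :
    (diagonal s * X * diagonal t * g) i j = s i * t a * (X * g) i j := by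
  rw [mul_apply, mul_apply,
    Finset.sum_eq_single a (fun k _ hk => by rw [mul_diagonal, diagonal_mul, hrow k hk]; ring)
      (by simp),
    Finset.sum_eq_single a (fun k _ hk => by rw [hrow k hk, zero_mul]) (by simp),
    mul_diagonal, diagonal_mul]
  ring

theorem inv_diagonal_mul_conj {K ι : Type*} [Field K] [Fintype ι] [DecidableEq ι] {t : ι → K}
    (ht : ∀ i, t i ≠ 0) (g X : Matrix ι ι K) :
    (diagonal t * g)⁻¹ * X * (diagonal t * g) = g⁻¹ * (diagonal t⁻¹ * X * diagonal t) * g := by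
  have hinv : (diagonal t)⁻¹ = diagonal t⁻¹ :=
    inv_eq_left_inv (by rw [diagonal_mul_diagonal]; ext i k; simp [ht])
  rw [Matrix.mul_inv_rev, hinv]
  simp only [mul_assoc]

namespace Skeletal

variable {n : ℕ} {X : Matrix (Fin n) (Fin n) ℂ}

theorem apply_eq_zero_of_ne (hX : Skeletal X) {i a k : Fin n} (ha : X i a ≠ 0) (hk : k ≠ a) :
    X i k = 0 := by
  by_contra hk'
  exact hk (hX.2.1 i k a hk' ha)

theorem exists_row_support (hX : Skeletal X) (i : Fin n) : ∃ a, ∀ k, k ≠ a → X i k = 0 := by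
  by_cases hrow : ∃ a, X i a ≠ 0
  · obtain ⟨a, ha⟩ := hrow
    exact ⟨a, fun k hk => hX.apply_eq_zero_of_ne ha hk⟩
  · push Not at hrow
    exact ⟨i, fun k _ => hrow k⟩

end Skeletal

theorem stmt11_general {n : ℕ} (X : Matrix (Fin n) (Fin n) ℂ) (hX : Skeletal X)
    (h : Fin n → Fin n)
    (g : Matrix (Fin n) (Fin n) ℂ) (hg : IsUnit g)
    (w : Equiv.Perm (Fin n))
    (hw1 : ∀ i : Fin n, g (w i) i = 1)
    (hw2 : ∀ i i' : Fin n, w i < i' → g i' i = 0)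
    (hw3 : ∀ i j : Fin n, i < j → g (w i) j = 0)
    (hmem : g⁻¹ * X * g ∈ hessSpace h)
    (j ℓ : Fin n)
    (hℓ1 : (X * g) ℓ j ≠ 0) (hℓ2 : ∀ i : Fin n, ℓ < i → (X * g) i j = 0)
    (hone : ∃! c : Fin n, c ≤ h j ∧ w c ≤ ℓ) :
    ∀ t : Fin n → ℂ, (∀ i, t i ≠ 0) →
      (∀ g' : Matrix (Fin n) (Fin n) ℂ, IsUnit g' → g'⁻¹ * X * g' ∈ hessSpace h →
        (Matrix.diagonal t * g')⁻¹ * X * (Matrix.diagonal t * g') ∈ hessSpace h) →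
      ∀ i a b : Fin n, (X * g) i j ≠ 0 → X i a ≠ 0 → X ℓ b ≠ 0 →
        t a * (t i)⁻¹ = t b * (t ℓ)⁻¹ := by
  intro t ht hstab i a b hi hXia hXℓb
  have hS : IsNormalizedSchubert g w := ⟨hw1, hw2, hw3⟩
  obtain ⟨c₀, -, hc₀⟩ := hone
  have huniq : ∀ c, c ≤ h j → w c ≤ ℓ → c = c₀ := fun c hc hw => hc₀ c ⟨hc, hw⟩
  set M := diagonal t⁻¹ * X * diagonal t
  have hM : ∀ r a, (∀ k, k ≠ a → X r k = 0) → (M * g) r j = (t r)⁻¹ * t a * (X * g) r j :=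
    fun r a hrow => diagonal_mul_mul_diagonal_mul_apply hrow j
  have hMmem : g⁻¹ * M * g ∈ hessSpace h := inv_diagonal_mul_conj ht g X ▸ hstab g hg hmem
  have hMzero : ∀ r, ℓ < r → (M * g) r j = 0 := fun r hr => by
    obtain ⟨a, hrow⟩ := hX.exists_row_support r
    rw [hM r a hrow, hℓ2 r hr, mul_zero]
  have hXcol := mul_apply_eq_of_unique_pivot hS hg hmem hℓ2 huniq
  have hMcol := mul_apply_eq_of_unique_pivot hS hg hMmem hMzero huniq
  have hcross : (M * g) i j * (X * g) ℓ j = (M * g) ℓ j * (X * g) i j := by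
    rw [hMcol i, hMcol ℓ, hXcol i, hXcol ℓ]
    ring
  rw [hM i a fun k => hX.apply_eq_zero_of_ne hXia, hM ℓ b fun k => hX.apply_eq_zero_of_ne hXℓb]
    at hcross
  refine mul_right_cancel₀ (mul_ne_zero hi hℓ1) ?_
  linear_combination hcross

/-- Let `X` be skeletal nilpotent, `H` a Hessenberg space, and suppose
there is `g ∈ GL(n,ℂ)` in normalized Schubert form (pivot permutation `w`) with
`g⁻¹ X g ∈ H` and a column `j` with `X g_j ≠ 0`, pivot row `ℓ`, such that exactly
one of the first `h(j)` columns of `g` has pivot row `≤ ℓ` (the pivot matrix `A_j`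
is `1 × 1`).  Then every `t ∈ T` for which `H(X,H)` is `{t}`-stable satisfies
`t_{X(i)}/t_i = t_{X(ℓ)}/t_ℓ` for every row `i` with `(X g_j)_i ≠ 0` (stated here
via `X i a ≠ 0` and `X ℓ b ≠ 0` identifying `a = X(i)`, `b = X(ℓ)`). -/
theorem stmt11 {n : ℕ} (X : Matrix (Fin n) (Fin n) ℂ) (hX : Skeletal X)
    (h : Fin n → Fin n) (hh1 : ∀ i, i ≤ h i) (hh2 : Monotone h)
    (g : Matrix (Fin n) (Fin n) ℂ) (hg : IsUnit g)
    (w : Equiv.Perm (Fin n))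
    (hw1 : ∀ i : Fin n, g (w i) i = 1)
    (hw2 : ∀ i i' : Fin n, w i < i' → g i' i = 0)
    (hw3 : ∀ i j : Fin n, i < j → g (w i) j = 0)
    (hmem : g⁻¹ * X * g ∈ hessSpace h)
    (j ℓ : Fin n)
    (hℓ1 : (X * g) ℓ j ≠ 0) (hℓ2 : ∀ i : Fin n, ℓ < i → (X * g) i j = 0)
    (hone : ∃! c : Fin n, c ≤ h j ∧ w c ≤ ℓ) :
    ∀ t : Fin n → ℂ, (∀ i, t i ≠ 0) →
      (∀ g' : Matrix (Fin n) (Fin n) ℂ, IsUnit g' → g'⁻¹ * X * g' ∈ hessSpace h →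
        (Matrix.diagonal t * g')⁻¹ * X * (Matrix.diagonal t * g') ∈ hessSpace h) →
      ∀ i a b : Fin n, (X * g) i j ≠ 0 → X i a ≠ 0 → X ℓ b ≠ 0 →
        t a * (t i)⁻¹ = t b * (t ℓ)⁻¹ :=
  stmt11_general X hX h g hg w hw1 hw2 hw3 hmem j ℓ hℓ1 hℓ2 hone
end

section
/- Let X be an n×n skeletal nilpotent matrix and H a Hessenberg space. Suppose that for every g ∈ GL(n,ℂ) in normalized Schubert form with g⁻¹ X g ∈ H and every column index j, at least one of the following holds: (i) X g_j = 0; (ii) the dependent matrix B_j of the system (g_1 ⋯ g_{h(j)} | X g_j) is a zero matrix; (iii) B_j is empty (has no rows); (iv) the pivot matrix A_j is a square piv(X g_j) × piv(X g_j) matrix. Then H(X,H) is T-stable. -/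
open Matrix Module

lemma Matrix.col_mul {l m o α : Type*} [Fintype m] [NonUnitalNonAssocSemiring α]
    (A : Matrix l m α) (B : Matrix m o α) (j : o) : (A * B).col j = A *ᵥ B.col j := rfl

lemma exists_diagonal_mul_diagonal_eq {R ι : Type*} [CommSemiring R] [Fintype ι] [DecidableEq ι]
    {X : Matrix ι ι R} (hX : ∀ i j j', X i j ≠ 0 → X i j' ≠ 0 → j = j') (a b : ι → R) :
    ∃ μ : ι → R, diagonal a * X * diagonal b = diagonal μ * X := by
  classical
  refine ⟨fun i => if hi : ∃ k, X i k ≠ 0 then a i * b hi.choose else 0, ?_⟩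
  ext i k
  simp only [mul_diagonal, diagonal_mul]
  by_cases hik : X i k = 0
  · simp [hik]
  have hi : ∃ k, X i k ≠ 0 := ⟨k, hik⟩
  rw [dif_pos hi, hX i _ _ hi.choose_spec hik]
  ring

lemma mul_updateRow_one_apply {R ι : Type*} [Semiring R] [Fintype ι] [DecidableEq ι]
    (m : Matrix ι ι R) (k : ι) (β : ι → R) (i c : ι) :
    (m * updateRow 1 k β) i c = (if c = k then 0 else m i c) + m i k * β c := by
  simp only [mul_apply, updateRow_apply, one_apply, mul_ite, mul_one, mul_zero]
  split_ifs with hck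
  · subst hck
    rw [Fintype.sum_eq_single c (fun x hx => by simp [hx])]
    simp
  · rw [Fintype.sum_eq_add k c (Ne.symm hck) (fun x hx => by simp [hx.1, hx.2])]
    simp [hck, add_comm]

lemma map_spanSubset_eq_of_col_mem {K ι : Type*} [Field K] [Fintype ι] [DecidableEq ι]
    {g : Matrix ι ι K} (hg : IsUnit g) {C R : Set ι}
    (hcard : C.ncard = R.ncard) (hcol : ∀ c ∈ C, g.col c ∈ Pi.spanSubset K R) :
    (Pi.spanSubset K C).map g.mulVecLin = Pi.spanSubset K R := by
  refine Submodule.eq_of_le_of_finrank_eq ?_ ?_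
  · rw [Pi.spanSubset, Submodule.map_span, Submodule.span_le]
    rintro _ ⟨_, ⟨c, hc, rfl⟩, rfl⟩
    simpa [mulVec_single_one] using hcol c hc
  · have e := Submodule.equivMapOfInjective g.mulVecLin (mulVec_injective_of_isUnit hg)
      (Pi.spanSubset K C)
    rw [← e.finrank_eq, Pi.dim_spanSubset, Pi.dim_spanSubset, hcard]

section Order

variable {K ι : Type*} [Field K] [LinearOrder ι]

def IsSchubertCol (g : Matrix ι ι K) (w : ι → ι) (c : ι) : Prop :=
  g (w c) c = 1 ∧ (∀ i, w c < i → g i c = 0) ∧ ∀ j, c < j → g (w c) j = 0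

lemma injective_of_forall_isSchubertCol {g : Matrix ι ι K} {w : ι → ι}
    (hg : ∀ i, IsSchubertCol g w i) : Function.Injective w := by
  intro i i' he
  by_contra hne
  rcases lt_or_gt_of_ne hne with hlt | hlt
  · have := (hg i).2.2 i' hlt
    rw [he, (hg i').1] at this
    exact one_ne_zero this
  · have := (hg i').2.2 i hlt
    rw [← he, (hg i).1] at this
    exact one_ne_zero this

variable [Fintype ι]

lemma exists_ne_zero_and_forall_lt_eq_zero {M : Type*} [Zero M] {v : ι → M} (hv : v ≠ 0) :
    ∃ ℓ, v ℓ ≠ 0 ∧ ∀ i, ℓ < i → v i = 0 := by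
  classical
  obtain ⟨i₀, hi₀⟩ := Function.ne_iff.1 hv
  obtain ⟨ℓ, hℓ, hmax⟩ := Finset.exists_max_image {i | v i ≠ 0} id ⟨i₀, by simpa using hi₀⟩
  refine ⟨ℓ, by simpa using hℓ, fun i hi => ?_⟩
  by_contra hvi
  exact (hmax i (by simpa using hvi)).not_gt hi

lemma eq_zero_of_mulVec_eq_zero_of_lt {g : Matrix ι ι K} {w : Equiv.Perm ι}
    (hw1 : ∀ c, g (w c) c ≠ 0) (hw2 : ∀ c i, w c < i → g i c = 0) {a : ι → K} {ℓ : ι}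
    (ha : ∀ i, ℓ < i → (g *ᵥ a) i = 0) {c : ι} (hc : ℓ < w c) : a c = 0 := by
  classical
  by_contra hac
  obtain ⟨c', hc', hmax⟩ := Finset.exists_max_image {c | a c ≠ 0} w ⟨c, by simpa using hac⟩
  rw [Finset.mem_filter_univ] at hc'
  have hpiv : (g *ᵥ a) (w c') = g (w c') c' * a c' := by
    refine Fintype.sum_eq_single c' fun b hb => ?_
    by_cases hab : a b = 0
    · rw [hab, mul_zero]
    · exact mul_eq_zero_of_left
        (hw2 b _ ((hmax b (by simpa using hab)).lt_of_ne (w.injective.ne hb))) _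
  rw [ha _ (hc.trans_le (hmax c (by simpa using hac)))] at hpiv
  exact mul_ne_zero (hw1 c') hc' hpiv.symm

variable [DecidableEq ι]

lemma exists_blockTriangular_isSchubertCol_step {m : Matrix ι ι K} (hm : IsUnit m) (k : ι)
    (w : ι → ι) :
    ∃ b : Matrix ι ι K, b.BlockTriangular id ∧ IsUnit b ∧ ∃ w' : ι → ι,
      IsSchubertCol (m * b) w' k ∧ ∀ i < k, IsSchubertCol m w i → IsSchubertCol (m * b) w' i := by
  have hcol : m.col k ≠ 0 := fun h0 =>
    Pi.single_ne_zero_iff.2 one_ne_zero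
      (mulVec_injective_of_isUnit hm (by rw [mulVec_single_one, h0, mulVec_zero]))
  obtain ⟨ℓ, hℓ, hbelow⟩ := exists_ne_zero_and_forall_lt_eq_zero hcol
  simp only [col_apply] at hℓ hbelow
  -- `m * updateRow 1 k β` scales column `k` by `p⁻¹` and subtracts multiples of it from the later
  -- columns so as to clear row `ℓ` to the right of column `k`.
  set p := m ℓ k
  set β : ι → K := fun c => if c = k then p⁻¹ else if k < c then -(m ℓ c * p⁻¹) else 0 with hβ
  have hβ_lt : ∀ c < k, β c = 0 := fun c hc => by simp [hβ, hc.ne, hc.not_gt]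
  have hb : (updateRow 1 k β).BlockTriangular id := fun i c hci => by
    by_cases hik : i = k
    · subst hik; simpa using hβ_lt c hci
    · simp [hik, one_apply, (show c < i from hci).ne']
  refine ⟨updateRow 1 k β, hb, ?_, Function.update w k ℓ, ?_, fun i hik hi => ?_⟩
  · rw [isUnit_iff_isUnit_det, det_of_isUpperTriangular hb, isUnit_iff_ne_zero,
      Finset.prod_ne_zero_iff]
    intro i _
    by_cases hik : i = k
    · subst hik; simpa [hβ] using hℓ
    · simp [hik]
  · refine ⟨?_, fun i hi => ?_, fun j hj => ?_⟩
    · simp [mul_updateRow_one_apply, hβ, p, hℓ]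
    · simp [mul_updateRow_one_apply, hβ, hbelow i (by simpa using hi)]
    · simp [mul_updateRow_one_apply, hβ, hj.ne', hj, p, mul_comm (m ℓ j), hℓ]
  · obtain ⟨h1, h2, h3⟩ := hi
    simp only [IsSchubertCol, mul_updateRow_one_apply, Function.update_of_ne hik.ne, hβ_lt i hik,
      if_neg hik.ne, mul_zero, add_zero, h3 k hik, zero_mul]
    refine ⟨h1, h2, fun j hj => ?_⟩
    simp [h3 j hj]

lemma exists_blockTriangular_isSchubertCol {g : Matrix ι ι K} (hg : IsUnit g) :
    ∃ b : Matrix ι ι K, b.BlockTriangular id ∧ IsUnit b ∧ ∃ w : Equiv.Perm ι,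
      ∀ i, IsSchubertCol (g * b) w i := by
  suffices ∀ s : Finset ι, ∃ b : Matrix ι ι K, b.BlockTriangular id ∧ IsUnit b ∧ ∃ w : ι → ι,
      ∀ i ∈ s, IsSchubertCol (g * b) w i by
    obtain ⟨b, hb, hbu, w, hw⟩ := this Finset.univ
    have hw' : ∀ i, IsSchubertCol (g * b) w i := fun i => hw i (Finset.mem_univ i)
    exact ⟨b, hb, hbu, Equiv.ofBijective w
      (Finite.injective_iff_bijective.1 (injective_of_forall_isSchubertCol hw')), hw'⟩
  intro s
  induction s using Finset.induction_on_max with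
  | empty => exact ⟨1, blockTriangular_one, isUnit_one, id, by simp⟩
  | insert k s hlt ih =>
    obtain ⟨b, hb, hbu, w, hw⟩ := ih
    obtain ⟨b', hb', hbu', w', hk, hold⟩ :=
      exists_blockTriangular_isSchubertCol_step (hg.mul hbu) k w
    refine ⟨b * b', hb.mul hb', hbu.mul hbu', w', ?_⟩
    simp only [Finset.mem_insert, forall_eq_or_imp, ← Matrix.mul_assoc]
    exact ⟨hk, fun i hi => hold i (hlt i hi) (hw i hi)⟩

lemma mul_mem_map_spanSubset {g : Matrix ι ι K} (hg : IsUnit g) {w : Equiv.Perm ι}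
    (hw1 : ∀ c, g (w c) c ≠ 0) (hw2 : ∀ c i, w c < i → g i c = 0) {s : Set ι} {v : ι → K}
    (hv : v ∈ (Pi.spanSubset K s).map g.mulVecLin) {ℓ : ι} (hvℓ : ∀ i, ℓ < i → v i = 0)
    (hcol : ∀ c ∈ {c ∈ s | w c ≤ ℓ}, g.col c ∈ Pi.spanSubset K (w '' {c ∈ s | w c ≤ ℓ}))
    (d : ι → K) : d * v ∈ (Pi.spanSubset K s).map g.mulVecLin := by
  set C := {c ∈ s | w c ≤ ℓ}
  have hspan := map_spanSubset_eq_of_col_mem hg (Set.ncard_image_of_injective C w.injective).symm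
    hcol
  have hvC : v ∈ Pi.spanSubset K (w '' C) := by
    obtain ⟨a, ha, rfl⟩ := hv
    rw [← hspan]
    refine ⟨a, Pi.mem_spanSubset_iff.2 fun c hc => ?_, rfl⟩
    by_cases hcs : c ∈ s
    · exact eq_zero_of_mulVec_eq_zero_of_lt hw1 hw2 hvℓ (not_le.1 fun h => hc ⟨hcs, h⟩)
    · exact Pi.mem_spanSubset_iff.1 ha c hcs
  have hdv : d * v ∈ Pi.spanSubset K (w '' C) :=
    Pi.mem_spanSubset_iff.2 fun i hi => by simp [Pi.mem_spanSubset_iff.1 hvC i hi]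
  rw [← hspan] at hdv
  exact Submodule.map_mono (Submodule.span_mono (Set.image_mono (Set.sep_subset _ _))) hdv

end Order

lemma exists_apply_eq_of_card_eq {n : ℕ} {w : Equiv.Perm (Fin n)} {p : Fin n → Prop}
    [DecidablePred p] {ℓ : Fin n} (hp : ∀ c, p c → w c ≤ ℓ)
    (hcard : Fintype.card {c // p c} = (ℓ : ℕ) + 1) {i : Fin n} (hi : i ≤ ℓ) :
    ∃ c, p c ∧ w c = i := by
  let f : {c // p c} → {i // i ≤ ℓ} := fun c => ⟨w c, hp c c.2⟩
  have hf : Function.Injective f := fun c c' he =>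
    Subtype.ext (w.injective (congrArg Subtype.val he))
  have hcard' : Fintype.card {c // p c} = Fintype.card {i // i ≤ ℓ} := by
    rw [hcard, Fintype.card_subtype, Finset.filter_ge_eq_Iic, Fin.card_Iic]
  obtain ⟨c, hc⟩ := ((Fintype.bijective_iff_injective_and_card f).2 ⟨hf, hcard'⟩).2 ⟨i, hi⟩
  exact ⟨c, c.2, congrArg Subtype.val hc⟩

/-- The three alternatives say that the dependent matrix `B_j` is zero, that it has no rows, and
that the pivot matrix `A_j` is square, for `C_j = {c | c ≤ m ∧ w c ≤ ℓ}`. -/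
lemma col_mem_spanSubset_of_cases {K : Type*} [Field K] {n : ℕ} {g : Matrix (Fin n) (Fin n) K}
    {w : Equiv.Perm (Fin n)} (hw2 : ∀ c i, w c < i → g i c = 0) {m ℓ : Fin n}
    (H : (∀ i c : Fin n, i ≤ ℓ → (∀ c' : Fin n, c' ≤ m → w c' ≤ ℓ → w c' ≠ i) →
            c ≤ m → w c ≤ ℓ → g i c = 0) ∨
          (¬ ∃ i : Fin n, i ≤ ℓ ∧ ∀ c' : Fin n, c' ≤ m → w c' ≤ ℓ → w c' ≠ i) ∨
          (Fintype.card {c : Fin n // c ≤ m ∧ w c ≤ ℓ} = (ℓ : ℕ) + 1)) :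
    ∀ c ∈ {c | c ≤ m ∧ w c ≤ ℓ}, g.col c ∈ Pi.spanSubset K (w '' {c | c ≤ m ∧ w c ≤ ℓ}) := by
  intro c hc
  refine Pi.mem_spanSubset_iff.2 fun i hi => ?_
  have hi' : ∀ c', c' ≤ m → w c' ≤ ℓ → w c' ≠ i := fun c' h1 h2 he => hi ⟨c', ⟨h1, h2⟩, he⟩
  rcases le_or_gt i ℓ with hiℓ | hℓi
  · rcases H with hzero | hempty | hcard
    · exact hzero i c hiℓ hi' hc.1 hc.2
    · exact (hempty ⟨i, hiℓ, hi'⟩).elim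
    · obtain ⟨c', hc', he⟩ := exists_apply_eq_of_card_eq (fun c hc => hc.2) hcard hiℓ
      exact (hi' c' hc'.1 hc'.2 he).elim
  · exact hw2 c i (hc.2.trans_lt hℓi)

section Hessenberg

variable {n : ℕ} {h : Fin n → Fin n}

lemma Matrix.BlockTriangular.mul_mem_hessSpace {U M : Matrix (Fin n) (Fin n) ℂ}
    (hU : U.BlockTriangular id) (hM : M ∈ hessSpace h) : U * M ∈ hessSpace h := by
  intro i j hij
  refine (mul_apply ..).trans <| Finset.sum_eq_zero fun k _ => ?_
  rcases lt_or_ge k i with hki | hik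
  · rw [hU hki, zero_mul]
  · rw [hM k j (hij.trans_le hik), mul_zero]

lemma mul_mem_hessSpace_of_blockTriangular (hh : Monotone h) {M V : Matrix (Fin n) (Fin n) ℂ}
    (hM : M ∈ hessSpace h) (hV : V.BlockTriangular id) : M * V ∈ hessSpace h := by
  intro i j hij
  refine (mul_apply ..).trans <| Finset.sum_eq_zero fun l _ => ?_
  rcases lt_or_ge j l with hjl | hlj
  · rw [hV hjl, mul_zero]
  · rw [hM i l ((hh hlj).trans_lt hij), zero_mul]

lemma conj_mul_mem_hessSpace_iff (hh : Monotone h) {b : Matrix (Fin n) (Fin n) ℂ}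
    (hb : b.BlockTriangular id) (hbu : IsUnit b) (g M : Matrix (Fin n) (Fin n) ℂ) :
    (g * b)⁻¹ * M * (g * b) ∈ hessSpace h ↔ g⁻¹ * M * g ∈ hessSpace h := by
  have := hbu.invertible
  have hb' : b⁻¹.BlockTriangular id := blockTriangular_inv_of_blockTriangular hb
  have hconj : (g * b)⁻¹ * M * (g * b) = b⁻¹ * (g⁻¹ * M * g) * b := by
    simp only [Matrix.mul_inv_rev, Matrix.mul_assoc]
  refine ⟨fun H => ?_, fun H => hconj ▸ mul_mem_hessSpace_of_blockTriangular hh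
    (hb'.mul_mem_hessSpace H) hb⟩
  have := mul_mem_hessSpace_of_blockTriangular hh (hb.mul_mem_hessSpace H) hb'
  rwa [hconj, ← Matrix.mul_assoc, ← Matrix.mul_assoc, mul_inv_of_invertible, Matrix.one_mul,
    Matrix.mul_assoc, mul_inv_of_invertible, Matrix.mul_one] at this

lemma conj_mem_hessSpace_iff {g : Matrix (Fin n) (Fin n) ℂ} (hg : IsUnit g)
    (M : Matrix (Fin n) (Fin n) ℂ) :
    g⁻¹ * M * g ∈ hessSpace h ↔
      ∀ j, (M * g).col j ∈ (Pi.spanSubset ℂ (Set.Iic (h j))).map g.mulVecLin := by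
  have := hg.invertible
  have hcol : ∀ j, (M * g).col j = g *ᵥ (g⁻¹ * M * g).col j := fun j => by
    rw [← col_mul, ← Matrix.mul_assoc, ← Matrix.mul_assoc, mul_inv_of_invertible,
      Matrix.one_mul]
  refine ⟨fun H j => ⟨_, Pi.mem_spanSubset_iff.2 fun c hc => H c j (not_le.1 hc), (hcol j).symm⟩,
    fun H i j hij => ?_⟩
  obtain ⟨a, ha, hav⟩ := H j
  rw [hcol j] at hav
  show (g⁻¹ * M * g).col j i = 0
  rw [← mulVec_injective_of_isUnit hg hav]
  exact Pi.mem_spanSubset_iff.1 ha i (not_le.2 hij)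

lemma conj_diagonal_mul_mem_hessSpace {g X : Matrix (Fin n) (Fin n) ℂ} (hg : IsUnit g)
    {w : Equiv.Perm (Fin n)} (hw1 : ∀ c, g (w c) c ≠ 0) (hw2 : ∀ c i, w c < i → g i c = 0)
    (hmem : g⁻¹ * X * g ∈ hessSpace h)
    (hcols : ∀ j ℓ, (X * g) ℓ j ≠ 0 → (∀ i, ℓ < i → (X * g) i j = 0) →
      ∀ c ∈ {c | c ≤ h j ∧ w c ≤ ℓ}, g.col c ∈ Pi.spanSubset ℂ (w '' {c | c ≤ h j ∧ w c ≤ ℓ}))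
    (d : Fin n → ℂ) : g⁻¹ * (diagonal d * X) * g ∈ hessSpace h := by
  rw [conj_mem_hessSpace_iff hg] at hmem ⊢
  intro j
  rw [Matrix.mul_assoc, col_mul, show diagonal d *ᵥ (X * g).col j = d * (X * g).col j from
    funext (mulVec_diagonal d _)]
  by_cases hv : (X * g).col j = 0
  · rw [hv, mul_zero]
    exact zero_mem _
  obtain ⟨ℓ, hℓ, hbelow⟩ := exists_ne_zero_and_forall_lt_eq_zero hv
  exact mul_mem_map_spanSubset hg hw1 hw2 (hmem j) hbelow (hcols j ℓ hℓ hbelow) d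

end Hessenberg

theorem stmt13_general {n : ℕ} (X : Matrix (Fin n) (Fin n) ℂ) (hX : Skeletal X)
    (h : Fin n → Fin n) (hh2 : Monotone h)
    (hyp : ∀ (g : Matrix (Fin n) (Fin n) ℂ) (w : Equiv.Perm (Fin n)),
      IsUnit g → (∀ i : Fin n, g (w i) i = 1) →
      (∀ i i' : Fin n, w i < i' → g i' i = 0) →
      (∀ i j : Fin n, i < j → g (w i) j = 0) →
      g⁻¹ * X * g ∈ hessSpace h →
      ∀ j ℓ : Fin n, (X * g) ℓ j ≠ 0 → (∀ i : Fin n, ℓ < i → (X * g) i j = 0) →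
        ((∀ i c : Fin n, i ≤ ℓ → (∀ c' : Fin n, c' ≤ h j → w c' ≤ ℓ → w c' ≠ i) →
            c ≤ h j → w c ≤ ℓ → g i c = 0) ∨
          (¬ ∃ i : Fin n, i ≤ ℓ ∧ ∀ c' : Fin n, c' ≤ h j → w c' ≤ ℓ → w c' ≠ i) ∨
          (Fintype.card {c : Fin n // c ≤ h j ∧ w c ≤ ℓ} = (ℓ : ℕ) + 1))) :
    ∀ t : Fin n → ℂ, (∀ i, t i ≠ 0) →
      ∀ g : Matrix (Fin n) (Fin n) ℂ, IsUnit g → g⁻¹ * X * g ∈ hessSpace h →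
        (Matrix.diagonal t * g)⁻¹ * X * (Matrix.diagonal t * g) ∈ hessSpace h := by
  intro t _ g hg hmem
  obtain ⟨μ, hμ⟩ := exists_diagonal_mul_diagonal_eq hX.2.1 (Ring.inverse t) t
  have hconj : (diagonal t * g)⁻¹ * X * (diagonal t * g) = g⁻¹ * (diagonal μ * X) * g := by
    rw [Matrix.mul_inv_rev, inv_diagonal, ← hμ]
    simp only [Matrix.mul_assoc]
  obtain ⟨b, hb, hbu, w, hw⟩ := exists_blockTriangular_isSchubertCol hg
  have hw1 : ∀ c, (g * b) (w c) c = 1 := fun c => (hw c).1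
  have hw2 : ∀ c i, w c < i → (g * b) i c = 0 := fun c => (hw c).2.1
  have hw3 : ∀ c j, c < j → (g * b) (w c) j = 0 := fun c => (hw c).2.2
  rw [← conj_mul_mem_hessSpace_iff hh2 hb hbu] at hmem
  rw [hconj, ← conj_mul_mem_hessSpace_iff hh2 hb hbu]
  exact conj_diagonal_mul_mem_hessSpace (hg.mul hbu) (fun c => hw1 c ▸ one_ne_zero) hw2 hmem
    (fun j ℓ hℓ hbelow => col_mem_spanSubset_of_cases hw2
      (hyp _ w (hg.mul hbu) hw1 hw2 hw3 hmem j ℓ hℓ hbelow)) μ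

/-- Let `X` be skeletal nilpotent and `H` a Hessenberg space.  Suppose
for every `g ∈ GL(n,ℂ)` in normalized Schubert form (pivot permutation `w`) with
`g⁻¹ X g ∈ H` and every column `j`, at least one of the following holds:
(i) `X g_j = 0` (no pivot row `ℓ` exists); or, with `ℓ = piv(X g_j)`:
(ii) the dependent matrix `B_j` is zero; (iii) `B_j` is empty (there are no rows
`i ≤ ℓ` outside `R_j`); (iv) the pivot matrix `A_j` is square of size
`piv(X g_j) × piv(X g_j)` (i.e. `#C_j = ℓ` in 1-based terms, `= (ℓ : ℕ) + 1`
in 0-based terms).  Then `H(X,H)` is `T`-stable. -/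
theorem stmt13 {n : ℕ} (X : Matrix (Fin n) (Fin n) ℂ) (hX : Skeletal X)
    (h : Fin n → Fin n) (hh1 : ∀ i, i ≤ h i) (hh2 : Monotone h)
    (hyp : ∀ (g : Matrix (Fin n) (Fin n) ℂ) (w : Equiv.Perm (Fin n)),
      IsUnit g → (∀ i : Fin n, g (w i) i = 1) →
      (∀ i i' : Fin n, w i < i' → g i' i = 0) →
      (∀ i j : Fin n, i < j → g (w i) j = 0) →
      g⁻¹ * X * g ∈ hessSpace h →
      ∀ j ℓ : Fin n, (X * g) ℓ j ≠ 0 → (∀ i : Fin n, ℓ < i → (X * g) i j = 0) →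
        ((∀ i c : Fin n, i ≤ ℓ → (∀ c' : Fin n, c' ≤ h j → w c' ≤ ℓ → w c' ≠ i) →
            c ≤ h j → w c ≤ ℓ → g i c = 0) ∨
          (¬ ∃ i : Fin n, i ≤ ℓ ∧ ∀ c' : Fin n, c' ≤ h j → w c' ≤ ℓ → w c' ≠ i) ∨
          (Fintype.card {c : Fin n // c ≤ h j ∧ w c ≤ ℓ} = (ℓ : ℕ) + 1))) :
    ∀ t : Fin n → ℂ, (∀ i, t i ≠ 0) →
      ∀ g : Matrix (Fin n) (Fin n) ℂ, IsUnit g → g⁻¹ * X * g ∈ hessSpace h →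
        (Matrix.diagonal t * g)⁻¹ * X * (Matrix.diagonal t * g) ∈ hessSpace h :=
  stmt13_general X hX h hh2 hyp
end

section
/- Let X = F_{n−1} be the regular nilpotent n×n matrix in Jordan form (entry 1 in positions (i, i+1) for i = 1,…,n−1, and 0 elsewhere), and let H be the Hessenberg space of the Hessenberg function with h(j) = n−1 for all j ≤ n−1 and h(n) = n. Then H(X,H) is T-stable, and moreover if g' ∈ B g B and g⁻¹ X g ∈ H then g'⁻¹ X g' ∈ H, so H(X,H) is a union of Schubert cells BwB/B. -/
/-!
`Hlast n` consists of the matrices whose last row vanishes off the diagonal, i.e. the matrices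
that are block upper triangular for the partition `{1, …, n-1} ⊔ {n}`; it is a subalgebra
containing the upper-triangular matrices. If `g⁻¹ X g ∈ Hlast n`, the last row `r` of `g⁻¹`
satisfies `r X = c r`, and as `X` shifts row vectors one step to the right this forces
`r` to be supported on the last coordinate, i.e. `g⁻¹ ∈ Hlast n`. Hence `g⁻¹ X g ∈ Hlast n`
exactly when `g ∈ Hlast n`, a condition visibly stable under `g ↦ b₁ g b₂`.
-/

open Matrix

variable {n : ℕ}

def lastBlock (n : ℕ) (i : Fin n) : Bool := decide ((i : ℕ) = n - 1)

theorem mem_Hlast_iff_blockTriangular {M : Matrix (Fin n) (Fin n) ℂ} :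
    M ∈ Hlast n ↔ M.BlockTriangular (lastBlock n) := by
  refine ⟨fun hM i j hij => ?_, fun hM i j hi hj => hM ?_⟩
  · simp only [lastBlock, Bool.lt_iff, decide_eq_false_iff_not, decide_eq_true_eq] at hij
    exact hM i j hij.2 (by omega)
  · simp only [lastBlock, Bool.lt_iff, decide_eq_false_iff_not, decide_eq_true_eq]
    omega

theorem mul_mem_Hlast {M N : Matrix (Fin n) (Fin n) ℂ} (hM : M ∈ Hlast n) (hN : N ∈ Hlast n) :
    M * N ∈ Hlast n := by
  rw [mem_Hlast_iff_blockTriangular] at hM hN ⊢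
  exact hM.mul hN

theorem inv_mem_Hlast {M : Matrix (Fin n) (Fin n) ℂ} (hM : M ∈ Hlast n) : M⁻¹ ∈ Hlast n := by
  by_cases hdet : IsUnit M.det
  · have := invertibleOfIsUnitDet M hdet
    rw [mem_Hlast_iff_blockTriangular] at hM ⊢
    exact blockTriangular_inv_of_blockTriangular hM
  · rw [nonsing_inv_apply_not_isUnit M hdet]
    exact fun _ _ _ _ => rfl

theorem mem_Hlast_of_UT {M : Matrix (Fin n) (Fin n) ℂ} (hM : UT M) : M ∈ Hlast n :=
  fun i j hi hj => hM i j (by rw [Fin.lt_def]; omega)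

theorem diagonal_mem_Hlast (d : Fin n → ℂ) : diagonal d ∈ Hlast n :=
  mem_Hlast_of_UT fun _ _ hij => diagonal_apply_ne _ hij.ne'

theorem Fmat_sub_one_apply (i j : Fin n) :
    Fmat n (n - 1) i j = if (i : ℕ) < n - 1 ∧ (j : ℕ) = i + 1 then 1 else 0 := by
  have : n - (n - 1) = 1 := by have := i.isLt; omega
  simp only [Fmat, of_apply, this, add_comm 1]

theorem Fmat_sub_one_mem_Hlast : Fmat n (n - 1) ∈ Hlast n := by
  intro i j hi _
  rw [Fmat_sub_one_apply, if_neg (by omega)]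

theorem vecMul_Fmat_sub_one_apply_of_eq_zero (r : Fin n → ℂ) {j : Fin n} (hj : (j : ℕ) = 0) :
    (r ᵥ* Fmat n (n - 1)) j = 0 := by
  rw [vecMul, dotProduct]
  refine Finset.sum_eq_zero fun k _ => ?_
  rw [Fmat_sub_one_apply, if_neg (by omega), mul_zero]

theorem vecMul_Fmat_sub_one_apply_of_eq_succ (r : Fin n → ℂ) {i j : Fin n}
    (hij : (j : ℕ) = i + 1) : (r ᵥ* Fmat n (n - 1)) j = r i := by
  rw [vecMul, dotProduct]
  refine (Finset.sum_eq_single_of_mem i (Finset.mem_univ i) fun k _ hki => ?_).trans ?_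
  · rw [Fmat_sub_one_apply, if_neg (by have := Fin.val_ne_of_ne hki; omega), mul_zero]
  · rw [Fmat_sub_one_apply, if_pos (by omega), mul_one]

theorem apply_eq_zero_of_vecMul_Fmat_sub_one_eq_smul {r : Fin n → ℂ} {c : ℂ}
    (h : r ᵥ* Fmat n (n - 1) = c • r) {i : Fin n} (hi : (i : ℕ) < n - 1) : r i = 0 := by
  have hshift : ∀ i j : Fin n, (j : ℕ) = i + 1 → r i = c * r j := fun i j hij => by
    rw [← vecMul_Fmat_sub_one_apply_of_eq_succ r hij, h, Pi.smul_apply, smul_eq_mul]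
  have hkill : ∀ (k : ℕ) (j : Fin n), (j : ℕ) = k → c * r j = 0 := by
    intro k
    induction k with
    | zero =>
      intro j hj
      rw [← smul_eq_mul, ← Pi.smul_apply, ← h, vecMul_Fmat_sub_one_apply_of_eq_zero r hj]
    | succ k ih =>
      intro j hj
      have hcc : c * (c * r j) = 0 := by
        rw [← hshift ⟨k, by omega⟩ j hj, ih _ rfl]
      exact (mul_eq_zero.mp hcc).elim (fun hc => by rw [hc, zero_mul]) id
  rw [hshift i ⟨i + 1, by omega⟩ rfl, hkill _ _ rfl]

theorem mul_apply_last_of_mem_Hlast {M : Matrix (Fin n) (Fin n) ℂ} (hM : M ∈ Hlast n)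
    (N : Matrix (Fin n) (Fin n) ℂ) {i : Fin n} (hi : (i : ℕ) = n - 1) :
    (M * N) i = M i i • N i := by
  ext j
  rw [mul_apply, Pi.smul_apply, smul_eq_mul]
  refine Finset.sum_eq_single_of_mem i (Finset.mem_univ i) fun k _ hki => ?_
  rw [hM i k hi (by have := Fin.val_ne_of_ne hki; omega), zero_mul]

theorem inv_mem_Hlast_of_conj_Fmat_sub_one_mem {g : Matrix (Fin n) (Fin n) ℂ} (hg : IsUnit g)
    (h : g⁻¹ * Fmat n (n - 1) * g ∈ Hlast n) : g⁻¹ ∈ Hlast n := by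
  intro i j hi hj
  have hdet : IsUnit g.det := (isUnit_iff_isUnit_det g).mp hg
  have heigen : g⁻¹ i ᵥ* Fmat n (n - 1) = (g⁻¹ * Fmat n (n - 1) * g) i i • g⁻¹ i := by
    rw [← mul_apply_last_of_mem_Hlast h _ hi, mul_nonsing_inv_cancel_right _ _ hdet,
      mul_apply_eq_vecMul]
  exact apply_eq_zero_of_vecMul_Fmat_sub_one_eq_smul heigen hj

theorem conj_mem_Hlast {X g : Matrix (Fin n) (Fin n) ℂ} (hX : X ∈ Hlast n) (hg : g ∈ Hlast n) :
    g⁻¹ * X * g ∈ Hlast n :=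
  mul_mem_Hlast (mul_mem_Hlast (inv_mem_Hlast hg) hX) hg

theorem conj_Fmat_sub_one_mem_Hlast_iff {g : Matrix (Fin n) (Fin n) ℂ} (hg : IsUnit g) :
    g⁻¹ * Fmat n (n - 1) * g ∈ Hlast n ↔ g ∈ Hlast n := by
  refine ⟨fun h => ?_, fun h => ?_⟩
  · rw [← nonsing_inv_nonsing_inv g ((isUnit_iff_isUnit_det g).mp hg)]
    exact inv_mem_Hlast (inv_mem_Hlast_of_conj_Fmat_sub_one_mem hg h)
  · exact conj_mem_Hlast Fmat_sub_one_mem_Hlast h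

theorem stmt14_general {n : ℕ} :
    (∀ t : Fin n → ℂ, (∀ i, t i ≠ 0) →
      ∀ g : Matrix (Fin n) (Fin n) ℂ, IsUnit g →
        g⁻¹ * Fmat n (n - 1) * g ∈ Hlast n →
        (Matrix.diagonal t * g)⁻¹ * Fmat n (n - 1) * (Matrix.diagonal t * g) ∈
          Hlast n) ∧
    (∀ g g' b₁ b₂ : Matrix (Fin n) (Fin n) ℂ, IsUnit g → IsUnit b₁ → IsUnit b₂ →
      UT b₁ → UT b₂ → g' = b₁ * g * b₂ →
      g⁻¹ * Fmat n (n - 1) * g ∈ Hlast n →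
      g'⁻¹ * Fmat n (n - 1) * g' ∈ Hlast n) := by
  refine ⟨fun t _ g hg hmem => ?_, fun g g' b₁ b₂ hg _ _ hb₁ hb₂ hg' hmem => ?_⟩
  · rw [conj_Fmat_sub_one_mem_Hlast_iff hg] at hmem
    exact conj_mem_Hlast Fmat_sub_one_mem_Hlast (mul_mem_Hlast (diagonal_mem_Hlast t) hmem)
  · rw [conj_Fmat_sub_one_mem_Hlast_iff hg] at hmem
    subst hg'
    exact conj_mem_Hlast Fmat_sub_one_mem_Hlast
      (mul_mem_Hlast (mul_mem_Hlast (mem_Hlast_of_UT hb₁) hmem) (mem_Hlast_of_UT hb₂))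

/-- Let `X = F_{n-1}` be the regular nilpotent in Jordan form and `H`
the Hessenberg space with `h(j) = n-1` for `j ≤ n-1` and `h(n) = n`.  Then `H(X,H)`
is `T`-stable, and moreover membership is constant on double cosets `B g B`, so
`H(X,H)` is a union of Schubert cells `BwB/B`. -/
theorem stmt14 {n : ℕ} (hn : 2 ≤ n) :
    (∀ t : Fin n → ℂ, (∀ i, t i ≠ 0) →
      ∀ g : Matrix (Fin n) (Fin n) ℂ, IsUnit g →
        g⁻¹ * Fmat n (n - 1) * g ∈ Hlast n →
        (Matrix.diagonal t * g)⁻¹ * Fmat n (n - 1) * (Matrix.diagonal t * g) ∈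
          Hlast n) ∧
    (∀ g g' b₁ b₂ : Matrix (Fin n) (Fin n) ℂ, IsUnit g → IsUnit b₁ → IsUnit b₂ →
      UT b₁ → UT b₂ → g' = b₁ * g * b₂ →
      g⁻¹ * Fmat n (n - 1) * g ∈ Hlast n →
      g'⁻¹ * Fmat n (n - 1) * g' ∈ Hlast n) :=
  stmt14_general
end

section
/- Let X be an n×n skeletal nilpotent matrix and let H be the Hessenberg space of a Hessenberg function with h(1) = 1 and h(2) = n. Then H(X,H) is T-stable: for every invertible diagonal matrix t and every g ∈ GL(n,ℂ), if g⁻¹ X g ∈ H then (tg)⁻¹ X (tg) ∈ H. -/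
open Matrix

namespace Matrix

variable {ι R : Type*} [Fintype ι]

theorem mulVec_eq_zero_of_mulVec_eq_smul [LinearOrder ι] [Semiring R] [NoZeroDivisors R]
    {X : Matrix ι ι R} (hX : ∀ i j, j ≤ i → X i j = 0) {v : ι → R} {c : R}
    (hv : X *ᵥ v = c • v) : X *ᵥ v = 0 := by
  classical
  by_cases hv0 : v = 0
  · rw [hv0, mulVec_zero]
  obtain ⟨k, hk⟩ := Function.ne_iff.mp hv0
  set S := Finset.univ.filter (fun i => v i ≠ 0)
  have hS : S.Nonempty := ⟨k, by simpa [S] using hk⟩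
  have hvmax : v (S.max' hS) ≠ 0 := by simpa [S] using S.max'_mem hS
  -- at the last nonzero coordinate of `v`, every term of `(X *ᵥ v)` vanishes
  have hXvmax : (X *ᵥ v) (S.max' hS) = 0 := by
    refine Finset.sum_eq_zero fun j _ => ?_
    change X _ j * v j = 0
    rcases le_or_gt j (S.max' hS) with hj | hj
    · rw [hX _ _ hj, zero_mul]
    · have : v j = 0 := by
        by_contra hvj
        exact (S.le_max' j (by simpa [S] using hvj)).not_gt hj
      rw [this, mul_zero]
  have hc : c = 0 := by
    rw [hv, Pi.smul_apply, smul_eq_mul] at hXvmax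
    exact (mul_eq_zero.mp hXvmax).resolve_right hvmax
  rw [hv, hc, zero_smul]

variable [DecidableEq ι]

theorem mulVec_diagonal_mulVec_eq_zero [CommSemiring R] {X : Matrix ι ι R}
    (hX : ∀ i j j', X i j ≠ 0 → X i j' ≠ 0 → j = j') {v : ι → R} (hv : X *ᵥ v = 0)
    (t : ι → R) : X *ᵥ (diagonal t *ᵥ v) = 0 := by
  have hterm : ∀ i j, X i j * v j = 0 := by
    intro i j
    by_cases hij : X i j = 0
    · rw [hij, zero_mul]
    have hvi := congr_fun hv i
    rwa [mulVec, dotProduct, Finset.sum_eq_single j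
      (fun k _ hkj => by
        by_cases hik : X i k = 0
        · rw [hik, zero_mul]
        · exact absurd (hX i k j hik hij) hkj)
      (fun hj => absurd (Finset.mem_univ j) hj)] at hvi
  funext i
  refine Finset.sum_eq_zero fun j _ => ?_
  rw [mulVec_diagonal, mul_left_comm, hterm, mul_zero]

theorem mulVec_col_eq_smul_of_conj [CommRing R] {g A : Matrix ι ι R} (hg : IsUnit g)
    {e : ι} (hcol : ∀ i ≠ e, (g⁻¹ * A * g) i e = 0) :
    A *ᵥ g.col e = (g⁻¹ * A * g) e e • g.col e := by
  set M := g⁻¹ * A * g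
  have hAg : A * g = g * M := by
    rw [← Matrix.mul_assoc, ← Matrix.mul_assoc,
      mul_nonsing_inv g ((isUnit_iff_isUnit_det g).mp hg), Matrix.one_mul]
  have hMcol : M.col e = M e e • Pi.single e 1 := by
    funext i
    by_cases hie : i = e
    · subst hie; simp
    · simp [hcol i hie, hie]
  rw [← mulVec_single_one g e, mulVec_mulVec, hAg, ← mulVec_mulVec, mulVec_single_one, hMcol,
    mulVec_smul]

theorem mul_mul_apply_eq_zero_of_mulVec_col_eq_zero [CommSemiring R]
    {P A N : Matrix ι ι R} {e : ι} (h : A *ᵥ N.col e = 0) (i : ι) : (P * A * N) i e = 0 := by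
  rw [← col_apply (P * A * N), ← mulVec_single_one, ← mulVec_mulVec, ← mulVec_mulVec,
    mulVec_single_one, h, mulVec_zero, Pi.zero_apply]

end Matrix

theorem mem_hessSpace_iff {n : ℕ} (hn : 2 ≤ n) {h : Fin n → Fin n} (hmono : Monotone h)
    (h1 : (h ⟨0, Nat.zero_lt_of_lt hn⟩ : ℕ) = 0) (h2 : (h ⟨1, hn⟩ : ℕ) = n - 1)
    {M : Matrix (Fin n) (Fin n) ℂ} :
    M ∈ hessSpace h ↔
      ∀ i ≠ (⟨0, Nat.zero_lt_of_lt hn⟩ : Fin n), M i ⟨0, Nat.zero_lt_of_lt hn⟩ = 0 := by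
  refine ⟨fun hM i hi => hM i _ ?_, fun hM i j hij => ?_⟩
  · rw [Fin.lt_def, h1]
    exact Nat.pos_of_ne_zero fun h0 => hi (Fin.ext h0)
  · by_cases hj : j = ⟨0, Nat.zero_lt_of_lt hn⟩
    · rw [hj] at hij ⊢
      refine hM i fun hi => ?_
      rw [hi, Fin.lt_def, h1] at hij
      exact Nat.not_lt_zero _ hij
    · have hle : h ⟨1, hn⟩ ≤ h j :=
        hmono (Fin.le_def.mpr (Nat.pos_of_ne_zero fun h0 => hj (Fin.ext h0)))
      rw [Fin.le_def, h2] at hle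
      rw [Fin.lt_def] at hij
      omega

/-- Let `X` be skeletal nilpotent and `H` the Hessenberg space of a
Hessenberg function with `h(1) = 1` and `h(2) = n` (1-based; 0-based: `h 0 = 0` and
`h 1 = n - 1`).  Then `H(X,H)` is `T`-stable. -/
theorem stmt15 {n : ℕ} (hn : 2 ≤ n)
    (X : Matrix (Fin n) (Fin n) ℂ) (hX : Skeletal X)
    (h : Fin n → Fin n) (hh2 : Monotone h)
    (h1 : (h ⟨0, by omega⟩ : ℕ) = 0) (h2 : (h ⟨1, by omega⟩ : ℕ) = n - 1)
    (t : Fin n → ℂ)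
    (g : Matrix (Fin n) (Fin n) ℂ) (hg : IsUnit g)
    (hmem : g⁻¹ * X * g ∈ hessSpace h) :
    (Matrix.diagonal t * g)⁻¹ * X * (Matrix.diagonal t * g) ∈ hessSpace h := by
  rw [mem_hessSpace_iff hn hh2 h1 h2] at hmem ⊢
  obtain ⟨hupper, hrow, -⟩ := hX
  have hker : X *ᵥ g.col ⟨0, by omega⟩ = 0 :=
    mulVec_eq_zero_of_mulVec_eq_smul hupper (mulVec_col_eq_smul_of_conj hg hmem)
  have htker : X *ᵥ (diagonal t * g).col ⟨0, by omega⟩ = 0 := by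
    have hcol : (diagonal t * g).col ⟨0, by omega⟩ = diagonal t *ᵥ g.col ⟨0, by omega⟩ := by
      ext i
      simp [mulVec_diagonal]
    rw [hcol]
    exact mulVec_diagonal_mulVec_eq_zero hrow hker t
  exact fun i _ => mul_mul_apply_eq_zero_of_mulVec_col_eq_zero htker i
end

section
/- Let H_0 be the Hessenberg space of the Hessenberg function with h(i) = i+1 for 1 ≤ i ≤ n−1 and h(n) = n, and let 1 ≤ k ≤ n−1. Then a diagonal matrix t = diag(t_1,…,t_n) ∈ T satisfies (for all g ∈ GL(n,ℂ): g⁻¹ F_k g ∈ H_0 implies (tg)⁻¹ F_k (tg) ∈ H_0) if and only if t_{1+(n−k)}/t_1 = t_{2+(n−k)}/t_2 = ⋯ = t_n/t_k; that is, the maximal subtorus of T under which H(F_k, H_0) is stable is the codimension-(k−1) torus K = {t ∈ T : t_{1+(n−k)}/t_1 = ⋯ = t_n/t_k}. In particular, for the Peterson variety H(F_{n−1}, H_0), t stabilizes it if and only if t_2/t_1 = t_3/t_2 = ⋯ = t_n/t_{n−1}. -/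
/-- The Hessenberg space `H_0` of the Hessenberg function `h(i) = i + 1` for
`i ≤ n-1`, `h(n) = n` (1-based): `M i j = 0` whenever `i > j + 1` (0-based:
`(j : ℕ) + 1 < (i : ℕ)`). -/
def H0 (n : ℕ) : Set (Matrix (Fin n) (Fin n) ℂ) :=
  {M | ∀ i j : Fin n, (j : ℕ) + 1 < (i : ℕ) → M i j = 0}

/-!
Conjugating by `t = diag(t_i)` turns `F_k` into the weighted shift with weights `t_{i+m}/t_i`
(`m = n - k`). If all weights equal `z`, the twisted shift is `z • F_k`, and `H_0` is stable under
scalars. Conversely, for consecutive rows `a, a + 1`, put `w = e_a - e_{a+1}` and let `u` be the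
indicator of `{a, a+1, a+m, a+m+1}`. Then `w ⬝ u = 0`, so `g = 1 + u wᵀ` has inverse `1 - u wᵀ`, and
for any weighted shift `M` the entries of `g⁻¹ M g` below the subdiagonal are
`-(M_{a,a+m} - M_{a+1,a+m+1}) u_i w_j`; entry `(a+m+1, a)` is among them. So `g` lies in the
Hessenberg variety of `F_k`, and `t g` does only if the weights at `a` and `a + 1` agree.
-/

open Matrix

section RankOne

variable {ι R : Type*} [Fintype ι] [DecidableEq ι] [CommRing R] {u w : ι → R}

theorem one_sub_vecMulVec_mul_one_add (h : w ⬝ᵥ u = 0) :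
    (1 - vecMulVec u w) * (1 + vecMulVec u w) = 1 := by
  rw [sub_mul, mul_add, mul_add, vecMulVec_mul_vecMulVec, h, zero_smul, vecMulVec_zero]
  simp

theorem inv_one_add_vecMulVec (h : w ⬝ᵥ u = 0) :
    (1 + vecMulVec u w)⁻¹ = 1 - vecMulVec u w :=
  inv_eq_left_inv (one_sub_vecMulVec_mul_one_add h)

theorem isUnit_one_add_vecMulVec (h : w ⬝ᵥ u = 0) : IsUnit (1 + vecMulVec u w) :=
  (isUnit_iff_isUnit_det _).mpr (isUnit_det_of_left_inverse (one_sub_vecMulVec_mul_one_add h))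

theorem inv_one_add_vecMulVec_mul_mul (h : w ⬝ᵥ u = 0) (M : Matrix ι ι R) :
    (1 + vecMulVec u w)⁻¹ * M * (1 + vecMulVec u w) =
      M + vecMulVec (M *ᵥ u) w - vecMulVec u (w ᵥ* M) -
        (w ⬝ᵥ M *ᵥ u) • vecMulVec u w := by
  rw [inv_one_add_vecMulVec h, sub_mul, one_mul, sub_mul, mul_add, mul_add, mul_one, mul_one,
    vecMulVec_mul, mul_vecMulVec, vecMulVec_mul_vecMulVec, ← dotProduct_mulVec,
    vecMulVec_smul]
  abel

end RankOne

section Superdiagonal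

variable {n m : ℕ} {R : Type*} [CommRing R]

def SupportedOnSuperdiag (m : ℕ) (M : Matrix (Fin n) (Fin n) R) : Prop :=
  ∀ i j : Fin n, (j : ℕ) ≠ i + m → M i j = 0

theorem SupportedOnSuperdiag.mulVec_apply {M : Matrix (Fin n) (Fin n) R}
    (hM : SupportedOnSuperdiag m M) (v : Fin n → R) {i j : Fin n} (hij : (j : ℕ) = i + m) :
    (M *ᵥ v) i = M i j * v j :=
  Fintype.sum_eq_single j fun l hl => by
    show M i l * v l = 0
    rw [hM i l (fun h => hl (Fin.ext (h.trans hij.symm))), zero_mul]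

theorem SupportedOnSuperdiag.diagonal_mul_mul {M : Matrix (Fin n) (Fin n) R}
    (hM : SupportedOnSuperdiag m M) (s t : Fin n → R) :
    SupportedOnSuperdiag m (diagonal s * M * diagonal t) := fun i j hij => by
  simp [hM i j hij]

theorem SupportedOnSuperdiag.inv_one_add_vecMulVec_mul_mul_apply
    {M : Matrix (Fin n) (Fin n) R} (hM : SupportedOnSuperdiag m M) {u w : Fin n → R} {p : ℕ}
    (huw : w ⬝ᵥ u = 0) (hw : ∀ j, w j ≠ 0 → p ≤ j) (hu : ∀ l, u l ≠ 0 → (l : ℕ) ≤ p + m + 1)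
    {i j : Fin n} (hij : (j : ℕ) + 1 < i) :
    ((1 + vecMulVec u w)⁻¹ * M * (1 + vecMulVec u w)) i j = -(w ⬝ᵥ M *ᵥ u) * (u i * w j) := by
  have hMu : (M *ᵥ u) i * w j = 0 := by
    by_cases hwj : w j = 0
    · rw [hwj, mul_zero]
    have := hw j hwj
    refine mul_eq_zero_of_left ?_ _
    refine (Finset.sum_eq_zero fun l _ => ?_ : ∑ l, M i l * u l = 0)
    by_cases hl : (l : ℕ) = i + m
    · rw [not_imp_comm.mp (hu l) (by omega), mul_zero]
    · rw [hM i l hl, zero_mul]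
  have hwM : u i * (w ᵥ* M) j = 0 := by
    by_cases hui : u i = 0
    · rw [hui, zero_mul]
    have := hu i hui
    refine mul_eq_zero_of_right _ ?_
    refine (Finset.sum_eq_zero fun l _ => ?_ : ∑ l, w l * M l j = 0)
    by_cases hl : (j : ℕ) = l + m
    · rw [not_imp_comm.mp (hw l) (by omega), zero_mul]
    · rw [hM l j hl, mul_zero]
  rw [inv_one_add_vecMulVec_mul_mul huw]
  simp only [Matrix.sub_apply, Matrix.add_apply, Matrix.smul_apply, vecMulVec_apply, smul_eq_mul,
    hM i j (by omega)]
  linear_combination hMu - hwM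

end Superdiagonal

theorem exists_isUnit_conj_mem_H0_iff {n m : ℕ} (hm : 1 ≤ m) {i i' j j' : Fin n}
    (hi' : (i' : ℕ) = i + 1) (hj : (j : ℕ) = i + m) (hj' : (j' : ℕ) = i' + m) :
    ∃ g : Matrix (Fin n) (Fin n) ℂ, IsUnit g ∧
      ∀ M, SupportedOnSuperdiag m M → (g⁻¹ * M * g ∈ H0 n ↔ M i j = M i' j') := by
  set u : Fin n → ℂ := fun l =>
    if (i : ℕ) ≤ l ∧ (l : ℕ) ≤ i + 1 ∨ (j : ℕ) ≤ l ∧ (l : ℕ) ≤ j + 1 then 1 else 0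
  set w : Fin n → ℂ := Pi.single i 1 - Pi.single i' 1
  have hu_eq_one : ∀ l : Fin n, l = i ∨ l = i' ∨ l = j ∨ l = j' → u l = 1 := by
    rintro l (rfl | rfl | rfl | rfl) <;> exact if_pos (by omega)
  have hu : ∀ l, u l ≠ 0 → (l : ℕ) ≤ i + m + 1 := by
    intro l hl
    by_contra h
    exact hl (if_neg (by omega))
  have hii' : i ≠ i' := fun h => by rw [h] at hi'; omega
  have hw_i : w i = 1 := by simp [w, hii']
  have hw : ∀ l, w l ≠ 0 → (i : ℕ) ≤ l := by
    intro l hl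
    by_contra h
    have hl_i : l ≠ i := fun e => h (e ▸ le_rfl)
    have hl_i' : l ≠ i' := fun e => h (by rw [e, hi']; omega)
    exact hl (by simp [w, hl_i, hl_i'])
  have huw : w ⬝ᵥ u = 0 := by
    rw [sub_dotProduct, single_dotProduct, single_dotProduct, hu_eq_one i (by simp),
      hu_eq_one i' (by simp), sub_self]
  have hwMu : ∀ M, SupportedOnSuperdiag m M → w ⬝ᵥ M *ᵥ u = M i j - M i' j' := by
    intro M hM
    rw [sub_dotProduct, single_dotProduct, single_dotProduct, hM.mulVec_apply u hj,
      hM.mulVec_apply u hj', hu_eq_one j (by simp), hu_eq_one j' (by simp)]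
    ring
  refine ⟨1 + vecMulVec u w, isUnit_one_add_vecMulVec huw, fun M hM => ?_⟩
  have hlower : ∀ a b : Fin n, (b : ℕ) + 1 < a →
      ((1 + vecMulVec u w)⁻¹ * M * (1 + vecMulVec u w)) a b =
        -(M i j - M i' j') * (u a * w b) := fun a b hab => by
    rw [hM.inv_one_add_vecMulVec_mul_mul_apply huw hw hu hab, hwMu M hM]
  constructor
  · intro h
    have := h j' i (by omega)
    rw [hlower j' i (by omega), hu_eq_one j' (by simp), hw_i] at this
    linear_combination -this
  · intro h a b hab
    rw [hlower a b hab, h, sub_self, neg_zero, zero_mul]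

theorem smul_mem_H0 {n : ℕ} (c : ℂ) {M : Matrix (Fin n) (Fin n) ℂ} (hM : M ∈ H0 n) :
    c • M ∈ H0 n := fun i j hij => by
  rw [Matrix.smul_apply, hM i j hij, smul_zero]

section Fmat

variable {n k m : ℕ}

theorem Fmat_supportedOnSuperdiag (hkm : k + m = n) : SupportedOnSuperdiag m (Fmat n k) :=
  fun i j hij => if_neg (by omega)

theorem Fmat_apply_of_val_eq (hkm : k + m = n) {i j : Fin n} (hij : (j : ℕ) = i + m) :
    Fmat n k i j = 1 :=
  if_pos (by omega)

end Fmat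

theorem inv_diagonal_mul_mul {ι K : Type*} [Fintype ι] [DecidableEq ι] [Field K] {t : ι → K}
    (ht : ∀ i, t i ≠ 0) (g M : Matrix ι ι K) :
    (diagonal t * g)⁻¹ * M * (diagonal t * g) = g⁻¹ * (diagonal t⁻¹ * M * diagonal t) * g := by
  have hinv : (diagonal t)⁻¹ = diagonal t⁻¹ :=
    inv_eq_left_inv (by rw [diagonal_mul_diagonal, ← diagonal_one]; congr; ext i; simp [ht i])
  rw [Matrix.mul_inv_rev, hinv]
  simp only [Matrix.mul_assoc]

theorem SupportedOnSuperdiag.inv_diagonal_mul_mul_eq_smul {n m : ℕ} {K : Type*} [Field K]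
    {M : Matrix (Fin n) (Fin n) K} (hM : SupportedOnSuperdiag m M) {t : Fin n → K} {z : K}
    (ht : ∀ i j : Fin n, (j : ℕ) = i + m → t j * (t i)⁻¹ = z) :
    diagonal t⁻¹ * M * diagonal t = z • M := by
  ext i j
  rw [mul_diagonal, diagonal_mul, Matrix.smul_apply, smul_eq_mul, Pi.inv_apply]
  by_cases hij : (j : ℕ) = i + m
  · rw [← ht i j hij]
    ring
  · rw [hM i j hij]
    ring

theorem forall_eq_of_forall_succ_eq {α : Type*} {n m : ℕ} {f : Fin n → Fin n → α}
    (h : ∀ i i' j j' : Fin n, (i' : ℕ) = i + 1 → (j : ℕ) = i + m → (j' : ℕ) = i' + m →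
      f i j = f i' j') :
    ∀ i i' j j' : Fin n, (j : ℕ) = i + m → (j' : ℕ) = i' + m → f i j = f i' j' := by
  have key : ∀ d (i i' j j' : Fin n), (i' : ℕ) = i + d → (j : ℕ) = i + m →
      (j' : ℕ) = i' + m → f i j = f i' j' := by
    intro d
    induction d with
    | zero =>
      intro i i' j j' hi hj hj'
      rw [Fin.ext (show (i : ℕ) = i' by omega), Fin.ext (show (j : ℕ) = j' by omega)]
    | succ d ih =>
      intro i i' j j' hi hj hj'
      exact (ih i ⟨i + d, by omega⟩ j ⟨i + d + m, by omega⟩ rfl hj rfl).trans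
        (h _ _ _ _ (by omega) rfl (by omega))
  intro i i' j j' hj hj'
  rcases le_total (i : ℕ) i' with hle | hle
  · exact key (i' - i) i i' j j' (by omega) hj hj'
  · exact (key (i - i') i' i j' j (by omega) hj' hj).symm

theorem stabilizes_Fmat_iff {n k m : ℕ} (hkm : k + m = n) (hk : 1 ≤ k) (hm : 1 ≤ m)
    {t : Fin n → ℂ} (ht : ∀ i, t i ≠ 0) :
    (∀ g : Matrix (Fin n) (Fin n) ℂ, IsUnit g → g⁻¹ * Fmat n k * g ∈ H0 n →
        (diagonal t * g)⁻¹ * Fmat n k * (diagonal t * g) ∈ H0 n) ↔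
      ∀ i i' j j' : Fin n, (j : ℕ) = i + m → (j' : ℕ) = i' + m →
        t j * (t i)⁻¹ = t j' * (t i')⁻¹ := by
  have hF := Fmat_supportedOnSuperdiag hkm
  constructor
  · intro hstab
    refine forall_eq_of_forall_succ_eq fun i i' j j' hi' hj hj' => ?_
    obtain ⟨g, hg, hconj⟩ := exists_isUnit_conj_mem_H0_iff hm hi' hj hj'
    have hFg : g⁻¹ * Fmat n k * g ∈ H0 n :=
      (hconj _ hF).mpr (by rw [Fmat_apply_of_val_eq hkm hj, Fmat_apply_of_val_eq hkm hj'])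
    have htFg := hstab g hg hFg
    rw [inv_diagonal_mul_mul ht, hconj _ (hF.diagonal_mul_mul _ _)] at htFg
    simpa [Fmat_apply_of_val_eq hkm hj, Fmat_apply_of_val_eq hkm hj', mul_comm] using htFg
  · intro hratio g _ hFg
    have hscalar : diagonal t⁻¹ * Fmat n k * diagonal t =
        (t ⟨m, by omega⟩ * (t ⟨0, by omega⟩)⁻¹) • Fmat n k :=
      hF.inv_diagonal_mul_mul_eq_smul fun i j hij => hratio i _ j _ hij (zero_add m).symm
    rw [inv_diagonal_mul_mul ht, hscalar, Matrix.mul_smul, Matrix.smul_mul]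
    exact smul_mem_H0 _ hFg

/-- A diagonal `t ∈ T` stabilizes the Hessenberg variety `H(F_k, H_0)`
iff `t_{1+(n-k)}/t_1 = t_{2+(n-k)}/t_2 = ⋯ = t_n/t_k`; i.e. the maximal subtorus of
`T` stabilizing `H(F_k, H_0)` is the codimension-`(k-1)` torus `K`.  In particular
`t` stabilizes the Peterson variety `H(F_{n-1}, H_0)` iff
`t_2/t_1 = t_3/t_2 = ⋯ = t_n/t_{n-1}`. -/
theorem stmt18 {n k : ℕ} (hk1 : 1 ≤ k) (hk2 : k ≤ n - 1) :
    (∀ t : Fin n → ℂ, (∀ i, t i ≠ 0) →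
      ((∀ g : Matrix (Fin n) (Fin n) ℂ, IsUnit g →
          g⁻¹ * Fmat n k * g ∈ H0 n →
          (Matrix.diagonal t * g)⁻¹ * Fmat n k * (Matrix.diagonal t * g) ∈ H0 n) ↔
        (∀ i i' j j' : Fin n, (i : ℕ) < k → (i' : ℕ) < k →
          (j : ℕ) = (i : ℕ) + (n - k) → (j' : ℕ) = (i' : ℕ) + (n - k) →
          t j * (t i)⁻¹ = t j' * (t i')⁻¹))) ∧
    (∀ t : Fin n → ℂ, (∀ i, t i ≠ 0) →
      ((∀ g : Matrix (Fin n) (Fin n) ℂ, IsUnit g →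
          g⁻¹ * Fmat n (n - 1) * g ∈ H0 n →
          (Matrix.diagonal t * g)⁻¹ * Fmat n (n - 1) * (Matrix.diagonal t * g) ∈
            H0 n) ↔
        (∀ i i' j j' : Fin n, (j : ℕ) = (i : ℕ) + 1 → (j' : ℕ) = (i' : ℕ) + 1 →
          t j * (t i)⁻¹ = t j' * (t i')⁻¹))) := by
  refine ⟨fun t ht => (stabilizes_Fmat_iff (m := n - k) (by omega) hk1 (by omega) ht).trans ?_,
    fun t ht => stabilizes_Fmat_iff (by omega) (by omega) le_rfl ht⟩
  constructor
  · intro h i i' j j' _ _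
    exact h i i' j j'
  · intro h i i' j j' hj hj'
    exact h i i' j j' (by omega) (by omega) hj hj'
end

section
/- Let X be an n×n skeletal nilpotent matrix whose nonzero rows are exactly i_1 < ⋯ < i_k, and let K = {t = diag(t_1,…,t_n) ∈ T : t_{i_1}⁻¹ t_{X(i_1)} = ⋯ = t_{i_k}⁻¹ t_{X(i_k)}}. Then for every Hessenberg space H, the fixed-point set of K on H(X,H), namely the set of cosets {gB ∈ G/B : g⁻¹ X g ∈ H and, for all t ∈ K, g⁻¹ t g ∈ B}, is finite. -/
open Matrix Finset Function

namespace RelChain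

variable {n : ℕ} (R : Fin n → Fin n → Prop)

open Classical in
noncomputable def next (i : Fin n) : Fin n :=
  if h : ∃ j, R i j then h.choose else i

noncomputable def last (i : Fin n) : Fin n :=
  (next R)^[n] i

noncomputable def depth (i : Fin n) : ℕ :=
  Nat.find (⟨n, rfl⟩ : ∃ k, (next R)^[k] i = last R i)

variable {R}

lemma next_eq (hfun : ∀ i j j', R i j → R i j' → j = j') {i j : Fin n} (h : R i j) :
    next R i = j := by
  have hex : ∃ j, R i j := ⟨j, h⟩
  rw [next, dif_pos hex]
  exact hfun i _ j hex.choose_spec h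

lemma rel_next {i : Fin n} (h : next R i ≠ i) : R i (next R i) := by
  by_cases hex : ∃ j, R i j
  · rw [next, dif_pos hex]
    exact hex.choose_spec
  · rw [next, dif_neg hex] at h
    exact absurd rfl h

lemma lt_next (hlt : ∀ i j, R i j → i < j) {i : Fin n} (h : next R i ≠ i) : i < next R i :=
  hlt _ _ (rel_next h)

lemma le_next (hlt : ∀ i j, R i j → i < j) (i : Fin n) : i ≤ next R i :=
  (eq_or_ne (next R i) i).elim Eq.ge fun h => (lt_next hlt h).le

lemma le_iterate_next (hlt : ∀ i j, R i j → i < j) (k : ℕ) (i : Fin n) :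
    i ≤ (next R)^[k] i :=
  id_le_iterate_of_id_le (le_next hlt) k i

/-- Along a chain every step moves strictly up, so after `n` steps it has stopped. -/
lemma next_last (hlt : ∀ i j, R i j → i < j) (i : Fin n) : next R (last R i) = last R i := by
  have key : ∀ k, next R ((next R)^[k] i) = (next R)^[k] i ∨ k ≤ ((next R)^[k] i : ℕ) := by
    intro k
    induction k with
    | zero => exact Or.inr (Nat.zero_le _)
    | succ k ih =>
      rw [iterate_succ_apply']
      by_cases hfix : next R ((next R)^[k] i) = (next R)^[k] i
      · rw [hfix]
        exact Or.inl hfix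
      · refine Or.inr ?_
        have := lt_next hlt hfix
        rcases ih with h | h
        · exact absurd h hfix
        · exact Nat.succ_le_of_lt (lt_of_le_of_lt h this)
  exact (key n).resolve_right fun h => absurd ((next R)^[n] i).isLt (not_lt.2 h)

lemma last_next (hlt : ∀ i j, R i j → i < j) (i : Fin n) : last R (next R i) = last R i := by
  rw [last, ← iterate_succ_apply, iterate_succ_apply']
  exact next_last hlt i

lemma depth_le (i : Fin n) : depth R i ≤ n :=
  Nat.find_le rfl

lemma depth_eq_zero_iff {i : Fin n} : depth R i = 0 ↔ i = last R i := by
  rw [depth, Nat.find_eq_zero]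
  rfl

lemma depth_eq_zero_of_next_eq {i : Fin n} (h : next R i = i) : depth R i = 0 :=
  depth_eq_zero_iff.2 (iterate_fixed h n).symm

lemma depth_next (hlt : ∀ i j, R i j → i < j) {i : Fin n} (h : next R i ≠ i) :
    depth R i = depth R (next R i) + 1 := by
  have hne : ¬ i = last R i := by
    rw [← last_next hlt]
    exact ((lt_next hlt h).trans_le (le_iterate_next hlt n _)).ne
  have hsucc : ∀ k,
      (next R)^[k + 1] i = last R i ↔ (next R)^[k] (next R i) = last R (next R i) :=
    fun k => by rw [iterate_succ_apply, last_next hlt]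
  rw [depth, depth, Nat.find_comp_succ _ ⟨n, (hsucc n).2 rfl⟩ hne]
  exact congrArg (· + 1) (Nat.find_congr' (hsucc _))

lemma eq_of_last_eq_of_depth_eq (hlt : ∀ i j, R i j → i < j)
    (hinj : ∀ i i' j, R i j → R i' j → i = i')
    {i i' : Fin n} (hlast : last R i = last R i') (hdepth : depth R i = depth R i') : i = i' := by
  induction hd : depth R i generalizing i i' with
  | zero =>
    rw [depth_eq_zero_iff.1 hd, depth_eq_zero_iff.1 (hdepth.symm.trans hd), hlast]
  | succ d ih =>
    have hmoves : ∀ {j : Fin n}, depth R j = d + 1 → next R j ≠ j := fun hj hfix => by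
      rw [depth_eq_zero_of_next_eq hfix] at hj
      exact Nat.succ_ne_zero d hj.symm
    have hi := hmoves hd
    have hi' := hmoves (hdepth.symm.trans hd)
    have hnext : next R i = next R i' := by
      have hd₁ := depth_next hlt hi
      have hd₂ := depth_next hlt hi'
      exact ih (by rw [last_next hlt, last_next hlt, hlast]) (by omega) (by omega)
    exact hinj i i' _ (rel_next hi) (hnext ▸ rel_next hi')

/-- Codes `(n + 1) * last R i + (n - depth R i)`: chains occupy disjoint blocks of `n + 1`
consecutive numbers, and moving one step along a chain adds one. -/
theorem exists_injective_grading (hfun : ∀ i j j', R i j → R i j' → j = j')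
    (hinj : ∀ i i' j, R i j → R i' j → i = i') (hlt : ∀ i j, R i j → i < j) :
    ∃ e : Fin n → ℕ, Injective e ∧ ∀ i j, R i j → e j = e i + 1 := by
  let code (i : Fin n) : Fin n × Fin (n + 1) :=
    (last R i, Fin.rev ⟨depth R i, Nat.lt_succ_of_le (depth_le i)⟩)
  have hcode : Injective code := fun i i' h => by
    simp only [code, Prod.mk.injEq, Fin.rev_inj, Fin.mk.injEq] at h
    exact eq_of_last_eq_of_depth_eq hlt hinj h.1 h.2
  refine ⟨fun i => finProdFinEquiv (code i),
    Fin.val_injective.comp (finProdFinEquiv.injective.comp hcode), fun i j hij => ?_⟩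
  have hj : next R i = j := next_eq hfun hij
  have hi : next R i ≠ i := hj ▸ (hlt i j hij).ne'
  have hdepth := depth_next hlt hi
  have hle := depth_le (R := R) i
  simp only [code, finProdFinEquiv_apply_val, Fin.val_rev, ← hj, last_next hlt]
  omega

end RelChain

lemma Skeletal.exists_injective_ratio_eq_two {n : ℕ} {X : Matrix (Fin n) (Fin n) ℂ}
    (hX : Skeletal X) :
    ∃ t : Fin n → ℂ,
      (∀ i, t i ≠ 0) ∧ Injective t ∧ ∀ i j, X i j ≠ 0 → (t i)⁻¹ * t j = 2 := by
  obtain ⟨e, he, hstep⟩ := RelChain.exists_injective_grading (R := fun i j => X i j ≠ 0)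
    hX.2.1 hX.2.2 fun i j hij => not_le.1 fun hle => hij (hX.1 i j hle)
  refine ⟨fun i => ((2 ^ e i : ℕ) : ℂ), fun i => by simp, ?_, fun i j hij => ?_⟩
  · exact Nat.cast_injective.comp ((Nat.pow_right_injective le_rfl).comp he)
  · simp only [hstep i j hij, pow_succ, Nat.cast_mul]
    rw [inv_mul_cancel_left₀ (by simp)]
    norm_num

section Triangularization

variable {n : ℕ} {g : Matrix (Fin n) (Fin n) ℂ} {t : Fin n → ℂ}

lemma eq_diag_of_leading_entry (hg : IsUnit g) (hU : UT (g⁻¹ * diagonal t * g)) {i k : Fin n}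
    (hik : g i k ≠ 0) (hlead : ∀ m < k, g i m = 0) : t i = (g⁻¹ * diagonal t * g) k k := by
  set U := g⁻¹ * diagonal t * g
  have hrel : diagonal t * g = g * U := by
    rw [← mul_assoc, ← mul_assoc, mul_nonsing_inv _ ((isUnit_iff_isUnit_det g).1 hg), one_mul]
  have hentry := congrFun (congrFun hrel i) k
  rw [diagonal_mul, mul_apply, Finset.sum_eq_single k] at hentry
  · exact mul_right_cancel₀ hik (hentry.trans (mul_comm _ _))
  · intro m _ hmk
    rcases lt_or_gt_of_ne hmk with hlt | hgt
    · rw [hlead m hlt, zero_mul]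
    · rw [hU m k hgt, mul_zero]
  · exact fun h => absurd (Finset.mem_univ k) h

lemma exists_perm_UT_permMatrix_mul (hg : IsUnit g) (ht : Injective t)
    (hU : UT (g⁻¹ * diagonal t * g)) :
    ∃ σ : Equiv.Perm (Fin n), UT (σ.permMatrix ℂ * g) := by
  have hrow : ∀ i, ∃ k, g i k ≠ 0 ∧ ∀ m < k, g i m = 0 := by
    intro i
    obtain ⟨k, hk⟩ : ∃ k, g i k ≠ 0 := by
      by_contra! hzero
      exact ((isUnit_iff_isUnit_det g).1 hg).ne_zero (det_eq_zero_of_row_eq_zero i hzero)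
    obtain ⟨k, hk, hmin⟩ := wellFounded_lt.has_min {k | g i k ≠ 0} ⟨k, hk⟩
    exact ⟨k, hk, fun m hm => not_not.1 fun h => hmin m h hm⟩
  choose lead hlead_ne hlead_min using hrow
  have hinj : Injective lead := fun i i' h => ht <| by
    rw [eq_diag_of_leading_entry (t := t) hg hU (hlead_ne i) (hlead_min i),
      eq_diag_of_leading_entry (t := t) hg hU (hlead_ne i') (hlead_min i'), h]
  let σ := Equiv.ofBijective lead (Finite.injective_iff_bijective.1 hinj)
  refine ⟨σ.symm, fun i k hki => ?_⟩
  rw [PEquiv.toMatrix_toPEquiv_mul, submatrix_apply]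
  exact hlead_min _ k (by rwa [Equiv.ofBijective_apply_symm_apply lead])

lemma exists_perm_UT_inv_mul (hg : IsUnit g) (ht : Injective t)
    (hU : UT (g⁻¹ * diagonal t * g)) :
    ∃ σ : Equiv.Perm (Fin n), UT (g⁻¹ * (σ.permMatrix ℂ)⁻¹) := by
  obtain ⟨σ, hσ⟩ := exists_perm_UT_permMatrix_mul hg ht hU
  have hPg : IsUnit (σ.permMatrix ℂ * g) := by
    refine IsUnit.mul ?_ hg
    simp [isUnit_iff_isUnit_det]
  have := hPg.invertible
  refine ⟨σ, ?_⟩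
  rw [← Matrix.mul_inv_rev]
  exact blockTriangular_inv_of_blockTriangular hσ

end Triangularization

theorem stmt19_general {n : ℕ} (X : Matrix (Fin n) (Fin n) ℂ) (hX : Skeletal X)
    (h : Fin n → Fin n) :
    ∃ F : Finset (Matrix (Fin n) (Fin n) ℂ),
      ∀ g : Matrix (Fin n) (Fin n) ℂ, IsUnit g → g⁻¹ * X * g ∈ hessSpace h →
        (∀ t : Fin n → ℂ, (∀ i, t i ≠ 0) →
          (∀ i i' j j' : Fin n, X i j ≠ 0 → X i' j' ≠ 0 →
            (t i)⁻¹ * t j = (t i')⁻¹ * t j') →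
          UT (g⁻¹ * Matrix.diagonal t * g)) →
        ∃ f ∈ F, IsUnit f ∧ UT (g⁻¹ * f) := by
  obtain ⟨t, ht0, htinj, hratio⟩ := hX.exists_injective_ratio_eq_two
  refine ⟨univ.image fun σ : Equiv.Perm (Fin n) => (σ.permMatrix ℂ)⁻¹,
    fun g hg _ hfix => ?_⟩
  have hregular := hfix t ht0 fun i i' j j' hij hij' => by rw [hratio i j hij, hratio i' j' hij']
  obtain ⟨σ, hσ⟩ := exists_perm_UT_inv_mul hg htinj hregular
  refine ⟨_, mem_image_of_mem _ (mem_univ σ), ?_, hσ⟩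
  simp [isUnit_iff_isUnit_det]

/-- Let `X` be skeletal nilpotent and let `K ⊆ T` be the subtorus of
diagonal matrices `t` whose ratios `t_i⁻¹ t_{X(i)}` agree over all nonzero rows `i`
of `X`.  Then for every Hessenberg space `H`, the fixed-point set of `K` on
`H(X,H)` — the set of cosets `gB` with `g⁻¹ X g ∈ H` and `g⁻¹ t g ∈ B` for all
`t ∈ K` — is finite: there is a finite set `F` of invertible matrices such that
every such `g` lies in the coset `fB` of some `f ∈ F`. -/
theorem stmt19 {n : ℕ} (X : Matrix (Fin n) (Fin n) ℂ) (hX : Skeletal X)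
    (h : Fin n → Fin n) (hh1 : ∀ i, i ≤ h i) (hh2 : Monotone h) :
    ∃ F : Finset (Matrix (Fin n) (Fin n) ℂ),
      ∀ g : Matrix (Fin n) (Fin n) ℂ, IsUnit g → g⁻¹ * X * g ∈ hessSpace h →
        (∀ t : Fin n → ℂ, (∀ i, t i ≠ 0) →
          (∀ i i' j j' : Fin n, X i j ≠ 0 → X i' j' ≠ 0 →
            (t i)⁻¹ * t j = (t i')⁻¹ * t j') →
          UT (g⁻¹ * Matrix.diagonal t * g)) →
        ∃ f ∈ F, IsUnit f ∧ UT (g⁻¹ * f) :=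
  stmt19_general X hX h
end
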